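/- arXiv:1203.4759 — 10 statements merged into one kernel-verified Lean document; each statement's English description precedes it below -/
import Mathlib

section
/- Let f : I → ℝ be differentiable on the interior of an interval I, with a, b ∈ I°, a < b, and f' integrable on [a,b]. Then (1/(b-a)) ∫_a^b f(x) dx − f((a+b)/2) = (b-a) [ ∫_0^{1/2} t f'(ta + (1-t)b) dt + ∫_{1/2}^1 (t-1) f'(ta + (1-t)b) dt ]. -/
/-!
Substituting `x = t a + (1 - t) b` turns both integrals on the right into integrals of
`(x - b) f'(x)` and `(x - a) f'(x)` over the two halves of `[a, b]`, scaled by `(a - b)⁻²`.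
Integrating each by parts, the boundary terms meet at the midpoint and add up to `(b - a) f((a + b)/2)`,
while the remaining integrals of `f` add up to `∫_a^b f`.
-/

open MeasureTheory intervalIntegral

theorem integral_sub_mul_deriv {f f' : ℝ → ℝ} {c d : ℝ} (e : ℝ)
    (hf : ∀ x ∈ Set.uIcc c d, HasDerivAt f (f' x) x) (hf' : IntervalIntegrable f' volume c d) :
    ∫ x in c..d, (x - e) * f' x = (d - e) * f d - (c - e) * f c - ∫ x in c..d, f x := by
  simpa only [one_mul] using integral_mul_deriv_eq_deriv_mul
    (fun x _ => (hasDerivAt_id' x).sub_const e) hf intervalIntegrable_const hf'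

theorem integral_sub_mul_deriv_add_integral_sub_mul_deriv {f f' : ℝ → ℝ} {a m b : ℝ}
    (hf : ∀ x ∈ Set.uIcc a b, HasDerivAt f (f' x) x) (hm : m ∈ Set.uIcc a b)
    (hf' : IntervalIntegrable f' volume a b) :
    (∫ x in a..m, (x - a) * f' x) + ∫ x in m..b, (x - b) * f' x
      = (b - a) * f m - ∫ x in a..b, f x := by
  have ham : Set.uIcc a m ⊆ Set.uIcc a b := Set.uIcc_subset_uIcc_left hm
  have hmb : Set.uIcc m b ⊆ Set.uIcc a b := Set.uIcc_subset_uIcc_right hm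
  have hf_int : ∀ {c d}, Set.uIcc c d ⊆ Set.uIcc a b → IntervalIntegrable f volume c d :=
    fun h => (HasDerivAt.continuousOn fun x hx => hf x (h hx)).intervalIntegrable
  rw [integral_sub_mul_deriv a (fun x hx => hf x (ham hx)) (hf'.mono_set ham),
    integral_sub_mul_deriv b (fun x hx => hf x (hmb hx)) (hf'.mono_set hmb),
    ← integral_add_adjacent_intervals (hf_int ham) (hf_int hmb)]
  ring

theorem integral_sub_mul_comp_convexCombination (g : ℝ → ℝ) (a b c d s : ℝ) :
    (a - b) ^ 2 * ∫ t in c..d, (t - s) * g (t * a + (1 - t) * b)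
      = ∫ x in c * a + (1 - c) * b..d * a + (1 - d) * b,
          (x - (s * a + (1 - s) * b)) * g x := by
  have hφ : ∀ t, t * a + (1 - t) * b = (a - b) * t + b := fun t => by ring
  simp_rw [hφ, ← smul_integral_comp_mul_add, smul_eq_mul, ← intervalIntegral.integral_const_mul]
  congr 1 with t
  ring

theorem hermite_hadamard_lemma
    (I : Set ℝ) (hI : I.OrdConnected) (f f' : ℝ → ℝ)
    (hf : ∀ x ∈ interior I, HasDerivAt f (f' x) x)
    (a b : ℝ) (ha : a ∈ interior I) (hb : b ∈ interior I) (hab : a < b)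
    (hint : IntervalIntegrable f' MeasureTheory.volume a b) :
    (1 / (b - a)) * (∫ x in a..b, f x) - f ((a + b) / 2)
      = (b - a) *
        ((∫ t in (0 : ℝ)..(1 / 2 : ℝ), t * f' (t * a + (1 - t) * b)) +
          ∫ t in (1 / 2 : ℝ)..(1 : ℝ), (t - 1) * f' (t * a + (1 - t) * b)) := by
  have hmid : (a + b) / 2 ∈ Set.uIcc b a :=
    Set.Icc_subset_uIcc' ⟨by linarith, by linarith⟩
  have hparts := integral_sub_mul_deriv_add_integral_sub_mul_deriv
    (fun x hx => hf x (hI.interior.uIcc_subset hb ha hx)) hmid hint.symm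
  have hhalf : 1 / 2 * a + (1 - 1 / 2) * b = (a + b) / 2 := by ring
  have hleft := integral_sub_mul_comp_convexCombination f' a b 0 (1 / 2) 0
  have hright := integral_sub_mul_comp_convexCombination f' a b (1 / 2) 1 1
  simp only [sub_zero, zero_mul, one_mul, zero_add, sub_self, add_zero, hhalf] at hleft hright
  rw [integral_symm a b] at hparts
  have hba : b - a ≠ 0 := sub_ne_zero.2 hab.ne'
  rw [one_div_mul_eq_div, div_sub' hba, div_eq_iff hba]
  linear_combination -hparts - hleft - hright
end

section
/- Let f be differentiable on the interior of an interval containing [a,b], a < b. If |f'| is convex on [a,b], then |(1/(b-a)) ∫_a^b f(x) dx − f((a+b)/2)| ≤ (b-a)(|f'(a)| + |f'(b)|)/8. -/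
open MeasureTheory intervalIntegral

/-!
Integrating by parts on each half of `[a, b]` against the Peano kernel `x - a`, resp. `x - b`,
gives `∫ f = (b - a) f(m) - ∫_a^m (x - a) f' x + ∫_a^m (x - a) f'(a + b - x)` with
`m = (a + b) / 2`, after reflecting the right half onto the left one. Convexity bounds `|f'|` by its secant line through the
endpoints, and integrating this linear bound against the kernel on both halves gives
`(b - a)² (|f' a| + |f' b|) / 8`.
-/

open Set
open scoped Interval

theorem ConvexOn.le_secant {g : ℝ → ℝ} {a b x : ℝ} (hg : ConvexOn ℝ (Icc a b) g)
    (hx : x ∈ Icc a b) : g x ≤ g a + (g b - g a) / (b - a) * (x - a) := by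
  rcases eq_or_lt_of_le hx.1 with rfl | hax
  · simp
  have hslope := hg.secant_mono (left_mem_Icc.2 (hx.1.trans hx.2)) hx
    (right_mem_Icc.2 (hx.1.trans hx.2)) hax.ne' (hax.trans_le hx.2).ne' hx.2
  rw [div_le_iff₀ (sub_pos.2 hax)] at hslope
  linarith

theorem IntervalIntegrable.of_hasDerivAt_of_abs_le {f f' g : ℝ → ℝ} {a b : ℝ}
    (hf : ∀ x ∈ uIcc a b, HasDerivAt f (f' x) x) (hg : IntervalIntegrable g volume a b)
    (hle : ∀ x ∈ uIcc a b, |f' x| ≤ g x) : IntervalIntegrable f' volume a b := by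
  have hΙ : ∀ᵐ x ∂volume.restrict (Ι a b), x ∈ uIcc a b :=
    (ae_restrict_mem measurableSet_uIoc).mono fun x hx => uIoc_subset_uIcc hx
  refine hg.mono_fun' ?_ (hΙ.mono fun x hx => hle x hx)
  exact (measurable_deriv f).aestronglyMeasurable.congr (hΙ.mono fun x hx => (hf x hx).deriv)

theorem integral_sub_mul_deriv_eq {f f' : ℝ → ℝ} {u v : ℝ} (c : ℝ)
    (hf : ∀ x ∈ uIcc u v, HasDerivAt f (f' x) x) (hf' : IntervalIntegrable f' volume u v) :
    ∫ x in u..v, (x - c) * f' x = (v - c) * f v - (u - c) * f u - ∫ x in u..v, f x := by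
  simpa using integral_mul_deriv_eq_deriv_mul (fun x _ => (hasDerivAt_id x).sub_const c) hf
    intervalIntegrable_const hf'

theorem integral_sub_mul_affine (c d p q : ℝ) :
    ∫ x in c..d, (x - c) * (p + q * (x - c)) = (d - c) ^ 2 * (3 * p + 2 * q * (d - c)) / 6 := by
  have hpoly : ∀ t : ℝ, t * (p + q * t) = p * t + q * t ^ 2 := fun t => by ring
  rw [integral_comp_sub_right (fun t => t * (p + q * t)), sub_self]
  simp only [hpoly]
  rw [intervalIntegral.integral_add (intervalIntegrable_id.const_mul p)
    ((intervalIntegrable_pow 2).const_mul q), intervalIntegral.integral_const_mul,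
    intervalIntegral.integral_const_mul, integral_id, integral_pow]
  ring

theorem abs_integral_sub_mul_le_of_abs_le_affine {g : ℝ → ℝ} {c d p q : ℝ} (hcd : c ≤ d)
    (hg : ∀ x ∈ Icc c d, |g x| ≤ p + q * (x - c)) :
    |∫ x in c..d, (x - c) * g x| ≤ (d - c) ^ 2 * (3 * p + 2 * q * (d - c)) / 6 := by
  rw [← integral_sub_mul_affine, ← Real.norm_eq_abs]
  refine norm_integral_le_of_norm_le hcd (ae_of_all _ fun x hx => ?_)
    ((by fun_prop : Continuous fun x => (x - c) * (p + q * (x - c))).intervalIntegrable _ _)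
  rw [Real.norm_eq_abs, abs_mul, abs_of_nonneg (sub_nonneg.2 hx.1.le)]
  exact mul_le_mul_of_nonneg_left (hg x (Ioc_subset_Icc_self hx)) (sub_nonneg.2 hx.1.le)

theorem integral_sub_mul_eq_neg_integral_reflect (f' : ℝ → ℝ) (a b : ℝ) :
    ∫ x in (a + b) / 2..b, (x - b) * f' x = -∫ x in a..(a + b) / 2, (x - a) * f' (a + b - x) := by
  have hreflect : ∀ x, (x - a) * f' (a + b - x) = (b - (a + b - x)) * f' (a + b - x) :=
    fun x => by ring
  simp only [hreflect]
  rw [integral_comp_sub_left (fun y => (b - y) * f' y), add_sub_cancel_left,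
    show a + b - (a + b) / 2 = (a + b) / 2 by ring, ← intervalIntegral.integral_neg]
  congr with x
  ring

theorem integral_eq_mul_midpoint_sub {f f' : ℝ → ℝ} {a b : ℝ} (hab : a ≤ b)
    (hf : ∀ x ∈ Icc a b, HasDerivAt f (f' x) x) (hf' : IntervalIntegrable f' volume a b) :
    ∫ x in a..b, f x = (b - a) * f ((a + b) / 2) - (∫ x in a..(a + b) / 2, (x - a) * f' x)
      + ∫ x in a..(a + b) / 2, (x - a) * f' (a + b - x) := by
  have ham : a ≤ (a + b) / 2 := by linarith
  have hmb : (a + b) / 2 ≤ b := by linarith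
  have hleft : uIcc a ((a + b) / 2) ⊆ Icc a b := by
    rw [uIcc_of_le ham]; exact Icc_subset_Icc le_rfl hmb
  have hright : uIcc ((a + b) / 2) b ⊆ Icc a b := by
    rw [uIcc_of_le hmb]; exact Icc_subset_Icc ham le_rfl
  have hcont : ContinuousOn f (Icc a b) := fun x hx => (hf x hx).continuousAt.continuousWithinAt
  have h₁ := integral_sub_mul_deriv_eq a (fun x hx => hf x (hleft hx))
    (hf'.mono_set (uIcc_of_le hab ▸ hleft))
  have h₂ := integral_sub_mul_deriv_eq b (fun x hx => hf x (hright hx))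
    (hf'.mono_set (uIcc_of_le hab ▸ hright))
  rw [integral_sub_mul_eq_neg_integral_reflect] at h₂
  rw [← integral_add_adjacent_intervals ((hcont.mono hleft).intervalIntegrable)
    ((hcont.mono hright).intervalIntegrable)]
  linear_combination h₁ + h₂

theorem hermite_hadamard_convex_abs_deriv_general
    (I : Set ℝ) (f f' : ℝ → ℝ) (a b : ℝ) (hab : a < b) (hsub : Set.Icc a b ⊆ I)
    (hf : ∀ x ∈ I, HasDerivAt f (f' x) x)
    (hconv : ConvexOn ℝ (Set.Icc a b) (fun x => |f' x|)) :
    |(1 / (b - a)) * (∫ x in a..b, f x) - f ((a + b) / 2)|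
      ≤ (b - a) * (|f' a| + |f' b|) / 8 := by
  set s := (|f' b| - |f' a|) / (b - a)
  have hs : s * (b - a) = |f' b| - |f' a| := div_mul_cancel₀ _ (sub_pos.2 hab).ne'
  have hf₀ : ∀ x ∈ Icc a b, HasDerivAt f (f' x) x := fun x hx => hf x (hsub hx)
  have hsec : ∀ x ∈ Icc a b, |f' x| ≤ |f' a| + s * (x - a) := fun x hx => hconv.le_secant hx
  have hint : IntervalIntegrable f' volume a b :=
    .of_hasDerivAt_of_abs_le (uIcc_of_le hab.le ▸ hf₀)
      ((by fun_prop : Continuous fun x => |f' a| + s * (x - a)).intervalIntegrable _ _)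
      (uIcc_of_le hab.le ▸ hsec)
  have hleft := abs_integral_sub_mul_le_of_abs_le_affine (g := f') (d := (a + b) / 2)
    (by linarith) fun x hx => hsec x ⟨hx.1, by linarith [hx.2]⟩
  -- on the reflected half, the secant bound is read from the endpoint `b`
  have hright := abs_integral_sub_mul_le_of_abs_le_affine (g := fun x => f' (a + b - x))
    (c := a) (d := (a + b) / 2) (p := |f' b|) (q := -s) (by linarith) fun x hx => by
      have := hsec (a + b - x) ⟨by linarith [hx.2], by linarith [hx.1]⟩
      linarith
  have hba : 0 < b - a := sub_pos.2 hab
  rw [integral_eq_mul_midpoint_sub hab.le hf₀ hint]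
  set I₁ := ∫ x in a..(a + b) / 2, (x - a) * f' x
  set I₂ := ∫ x in a..(a + b) / 2, (x - a) * f' (a + b - x)
  have hdiff : 1 / (b - a) * ((b - a) * f ((a + b) / 2) - I₁ + I₂) - f ((a + b) / 2)
      = (I₂ - I₁) / (b - a) := by
    field_simp
    ring
  rw [hdiff, abs_div, abs_of_pos hba, div_le_iff₀ hba]
  linarith [abs_sub I₂ I₁]

theorem hermite_hadamard_convex_abs_deriv
    (I : Set ℝ) (hIopen : IsOpen I) (hIconn : I.OrdConnected)
    (f f' : ℝ → ℝ) (a b : ℝ) (hab : a < b) (hsub : Set.Icc a b ⊆ I)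
    (hf : ∀ x ∈ I, HasDerivAt f (f' x) x)
    (hconv : ConvexOn ℝ (Set.Icc a b) (fun x => |f' x|)) :
    |(1 / (b - a)) * (∫ x in a..b, f x) - f ((a + b) / 2)|
      ≤ (b - a) * (|f' a| + |f' b|) / 8 :=
  hermite_hadamard_convex_abs_deriv_general I f f' a b hab hsub hf hconv
end

section
/- Condition C implies: for every x, y ∈ K and every t₁, t₂ ∈ [0,1], η(y + t₂·η(x,y), y + t₁·η(x,y)) = (t₂ − t₁)·η(x,y). -/
/-!
Condition C says that `η w z = w - z` whenever `z` lies on the ray `w + s • η u w`, `s ∈ [0, 1]`,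
for some `u ∈ K`. With `w = y + t₂ η(x, y)`, the point `y + t₁ η(x, y)` lies on such a ray:
towards `x` (where `η(x, w) = (1 - t₂) η(x, y)`) if `t₂ ≤ t₁`, and towards `y`
(where `η(y, w) = -t₂ η(x, y)`) if `t₁ ≤ t₂`.
-/

open Set

theorem exists_mem_Icc_mul_eq {a b : ℝ} (ha : 0 ≤ a) (hab : a ≤ b) :
    ∃ s ∈ Icc (0 : ℝ) 1, s * b = a :=
  ⟨a / b, ⟨div_nonneg ha (ha.trans hab), div_le_one_of_le₀ hab (ha.trans hab)⟩,
    div_mul_cancel_of_imp fun hb => le_antisymm (hb ▸ hab) ha⟩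

theorem eta_eq_sub_of_eq_add_mul {K : Set ℝ} {η : ℝ → ℝ → ℝ}
    (hC1 : ∀ x ∈ K, ∀ y ∈ K, ∀ t ∈ Icc (0 : ℝ) 1, η y (y + t * η x y) = -t * η x y)
    {u w z s : ℝ} (hu : u ∈ K) (hw : w ∈ K) (hs : s ∈ Icc (0 : ℝ) 1)
    (hz : z = w + s * η u w) : η w z = w - z := by
  subst hz
  rw [hC1 u hu w hw s hs]
  ring

theorem condition_C_consequence_general
    (K : Set ℝ) (η : ℝ → ℝ → ℝ)
    (hinvex : ∀ x ∈ K, ∀ y ∈ K, ∀ t ∈ Set.Icc (0 : ℝ) 1, y + t * η x y ∈ K)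
    (hC1 : ∀ x ∈ K, ∀ y ∈ K, ∀ t ∈ Set.Icc (0 : ℝ) 1,
      η y (y + t * η x y) = -t * η x y)
    (hC2 : ∀ x ∈ K, ∀ y ∈ K, ∀ t ∈ Set.Icc (0 : ℝ) 1,
      η x (y + t * η x y) = (1 - t) * η x y) :
    ∀ x ∈ K, ∀ y ∈ K, ∀ t₁ ∈ Set.Icc (0 : ℝ) 1, ∀ t₂ ∈ Set.Icc (0 : ℝ) 1,
      η (y + t₂ * η x y) (y + t₁ * η x y) = (t₂ - t₁) * η x y := by
  intro x hx y hy t₁ ht₁ t₂ ht₂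
  have hw : y + t₂ * η x y ∈ K := hinvex x hx y hy t₂ ht₂
  suffices ∃ u ∈ K, ∃ s ∈ Icc (0 : ℝ) 1,
      y + t₁ * η x y = y + t₂ * η x y + s * η u (y + t₂ * η x y) by
    obtain ⟨u, hu, s, hs, hz⟩ := this
    rw [eta_eq_sub_of_eq_add_mul hC1 hu hw hs hz]
    ring
  rcases le_total t₂ t₁ with h | h
  · obtain ⟨s, hs, hsb⟩ := exists_mem_Icc_mul_eq (b := 1 - t₂) (sub_nonneg.2 h) (by linarith [ht₁.2])
    refine ⟨x, hx, s, hs, ?_⟩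
    rw [hC2 x hx y hy t₂ ht₂]
    linear_combination (-η x y) * hsb
  · obtain ⟨s, hs, hsb⟩ := exists_mem_Icc_mul_eq (b := t₂) (sub_nonneg.2 h) (by linarith [ht₁.1])
    refine ⟨y, hy, s, hs, ?_⟩
    rw [hC1 x hx y hy t₂ ht₂]
    linear_combination η x y * hsb

theorem condition_C_consequence
    (K : Set ℝ) (hK : IsOpen K) (η : ℝ → ℝ → ℝ)
    (hinvex : ∀ x ∈ K, ∀ y ∈ K, ∀ t ∈ Set.Icc (0 : ℝ) 1, y + t * η x y ∈ K)
    (hC1 : ∀ x ∈ K, ∀ y ∈ K, ∀ t ∈ Set.Icc (0 : ℝ) 1,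
      η y (y + t * η x y) = -t * η x y)
    (hC2 : ∀ x ∈ K, ∀ y ∈ K, ∀ t ∈ Set.Icc (0 : ℝ) 1,
      η x (y + t * η x y) = (1 - t) * η x y) :
    ∀ x ∈ K, ∀ y ∈ K, ∀ t₁ ∈ Set.Icc (0 : ℝ) 1, ∀ t₂ ∈ Set.Icc (0 : ℝ) 1,
      η (y + t₂ * η x y) (y + t₁ * η x y) = (t₂ - t₁) * η x y :=
  condition_C_consequence_general K η hinvex hC1 hC2
end

section
/- Under the same setup, with p > 1 and |f'|^{p/(p-1)} preinvex on K: |(1/η(b,a)) ∫_a^{a+η(b,a)} f(x) dx − f((2a+η(b,a))/2)| ≤ (η(b,a)/16)(4/(p+1))^{1/p} [ (3|f'(a)|^{p/(p-1)} + |f'(b)|^{p/(p-1)})^{(p-1)/p} + (|f'(a)|^{p/(p-1)} + 3|f'(b)|^{p/(p-1)})^{(p-1)/p} ]. -/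
/-!
Rescale to `g t = f (a + t η) / η` on `[0, 1]`. Integrating by parts against the kernel equal to
`t` on `[0, 1/2]` and to `t - 1` on `[1/2, 1]` gives
`∫₀¹ g - g (1/2) = -(∫₀^{1/2} t g' + ∫_{1/2}^1 (t - 1) g')`.
On each half, Hölder's inequality with exponents `p` and `q = p/(p-1)` bounds the kernel term by
`(∫ t^p)^{1/p} (∫ |g'|^q)^{1/q}`, and the preinvexity bound on `|g'|^q` integrates to
`(3A + B)/8`, resp. `(A + 3B)/8`.
-/

open MeasureTheory intervalIntegral Set Real

theorem memLp_of_abs_rpow_le {α : Type*} [MeasurableSpace α] {μ : Measure α} {φ ψ : α → ℝ}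
    {q : ℝ} (hq : 0 < q) (hφ : AEStronglyMeasurable φ μ) (hψ : Integrable ψ μ)
    (hbound : ∀ᵐ x ∂μ, |φ x| ^ q ≤ ψ x) :
    MemLp φ (ENNReal.ofReal q) μ := by
  refine (integrable_norm_rpow_iff hφ (by simpa using hq) ENNReal.ofReal_ne_top).1 ?_
  rw [ENNReal.toReal_ofReal hq.le]
  refine hψ.mono' (hφ.norm.aemeasurable.pow_const q).aestronglyMeasurable ?_
  filter_upwards [hbound] with x hx
  rwa [Real.norm_eq_abs, abs_of_nonneg (by positivity), Real.norm_eq_abs]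

theorem integral_sub_eq_neg_integral_mul_deriv {g g' : ℝ → ℝ} {c : ℝ} (hc : c ∈ Icc (0 : ℝ) 1)
    (hg : ∀ t ∈ Icc (0 : ℝ) 1, HasDerivAt g (g' t) t) (hg' : IntervalIntegrable g' volume 0 1) :
    (∫ t in (0 : ℝ)..1, g t) - g c
      = -((∫ t in (0 : ℝ)..c, t * g' t) + ∫ t in c..1, (t - 1) * g' t) := by
  have hleft : uIcc 0 c ⊆ uIcc (0 : ℝ) 1 := uIcc_subset_uIcc_left (by simpa [uIcc_of_le] using hc)
  have hright : uIcc c 1 ⊆ uIcc (0 : ℝ) 1 := uIcc_subset_uIcc_right (by simpa [uIcc_of_le] using hc)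
  have hg01 : ∀ t ∈ uIcc (0 : ℝ) 1, HasDerivAt g (g' t) t := by
    simpa [uIcc_of_le] using hg
  have hgc : ContinuousOn g (uIcc 0 1) := fun t ht => (hg01 t ht).continuousAt.continuousWithinAt
  rw [integral_mul_deriv_eq_deriv_mul (fun t _ => hasDerivAt_id' t) (fun t ht => hg01 t (hleft ht))
      intervalIntegrable_const (hg'.mono_set hleft),
    integral_mul_deriv_eq_deriv_mul (fun t _ => (hasDerivAt_id' t).sub_const 1)
      (fun t ht => hg01 t (hright ht)) intervalIntegrable_const (hg'.mono_set hright),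
    ← integral_add_adjacent_intervals ((hgc.mono hleft).intervalIntegrable)
      ((hgc.mono hright).intervalIntegrable)]
  simp only [one_mul]
  ring

theorem integral_mul_abs_le_holder {p q : ℝ} (hpq : p.HolderConjugate q) {φ : ℝ → ℝ} {c : ℝ}
    (hc : 0 ≤ c) (hφ : MemLp φ (ENNReal.ofReal q) (volume.restrict (Ioc 0 c))) :
    ∫ t in (0 : ℝ)..c, t * |φ t|
      ≤ (c ^ (p + 1) / (p + 1)) ^ (1 / p) * (∫ t in (0 : ℝ)..c, |φ t| ^ q) ^ (1 / q) := by
  have hid : MemLp (fun t : ℝ => t) (ENNReal.ofReal p) (volume.restrict (Ioc 0 c)) := by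
    refine MemLp.of_bound aestronglyMeasurable_id c ?_
    filter_upwards [ae_restrict_mem measurableSet_Ioc] with t ht
    rw [Real.norm_eq_abs, abs_of_pos ht.1]
    exact ht.2
  have hid_nonneg : 0 ≤ᵐ[volume.restrict (Ioc 0 c)] fun t : ℝ => t := by
    filter_upwards [ae_restrict_mem measurableSet_Ioc] with t ht using ht.1.le
  have hpow : ∫ t in (0 : ℝ)..c, t ^ p = c ^ (p + 1) / (p + 1) := by
    rw [integral_rpow (Or.inl (by linarith [hpq.pos])), zero_rpow (by linarith [hpq.pos]), sub_zero]
  simp only [integral_of_le hc] at hpow ⊢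
  rw [← hpow]
  exact integral_mul_le_Lp_mul_Lq_of_nonneg hpq hid_nonneg (ae_of_all _ fun t => abs_nonneg _)
    hid hφ.abs

theorem integral_affine_zero_half (A B : ℝ) :
    ∫ t in (0 : ℝ)..(1 / 2), ((1 - t) * A + t * B) = (3 * A + B) / 8 := by
  simp only [show ∀ t : ℝ, (1 - t) * A + t * B = A + (B - A) * t from fun t => by ring]
  rw [intervalIntegral.integral_add intervalIntegrable_const (intervalIntegrable_id.const_mul _),
    intervalIntegral.integral_const_mul, intervalIntegral.integral_const, integral_id]
  norm_num
  ring

theorem integral_mul_abs_le_of_rpow_le_affine {p q : ℝ} (hpq : p.HolderConjugate q) {φ : ℝ → ℝ}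
    (hφ : Measurable φ) {A B : ℝ}
    (hbound : ∀ t ∈ Icc (0 : ℝ) (1 / 2), |φ t| ^ q ≤ (1 - t) * A + t * B) :
    ∫ t in (0 : ℝ)..(1 / 2), t * |φ t|
      ≤ ((1 / 2) ^ (p + 1) / (p + 1)) ^ (1 / p) * ((3 * A + B) / 8) ^ (1 / q) := by
  have hbound_ae : ∀ᵐ t ∂volume.restrict (Ioc (0 : ℝ) (1 / 2)),
      |φ t| ^ q ≤ (1 - t) * A + t * B := by
    filter_upwards [ae_restrict_mem measurableSet_Ioc] with t ht
    exact hbound t (Ioc_subset_Icc_self ht)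
  have hφq : MemLp φ (ENNReal.ofReal q) (volume.restrict (Ioc 0 (1 / 2))) :=
    memLp_of_abs_rpow_le hpq.symm.pos hφ.aestronglyMeasurable
      (Continuous.integrableOn_Ioc (by fun_prop)) hbound_ae
  have hφq_int : IntervalIntegrable (fun t => |φ t| ^ q) volume 0 (1 / 2) := by
    rw [intervalIntegrable_iff_integrableOn_Ioc_of_le (by norm_num)]
    have := hφq.integrable_norm_rpow'
    simp only [Real.norm_eq_abs, ENNReal.toReal_ofReal hpq.symm.nonneg] at this
    exact this
  have hφq_le : ∫ t in (0 : ℝ)..(1 / 2), |φ t| ^ q ≤ (3 * A + B) / 8 := by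
    rw [← integral_affine_zero_half]
    exact intervalIntegral.integral_mono_on (by norm_num) hφq_int
      (Continuous.intervalIntegrable (by fun_prop) _ _) hbound
  calc ∫ t in (0 : ℝ)..(1 / 2), t * |φ t|
      ≤ ((1 / 2) ^ (p + 1) / (p + 1)) ^ (1 / p) * (∫ t in (0 : ℝ)..(1 / 2), |φ t| ^ q) ^ (1 / q) :=
        integral_mul_abs_le_holder hpq (by norm_num) hφq
    _ ≤ ((1 / 2) ^ (p + 1) / (p + 1)) ^ (1 / p) * ((3 * A + B) / 8) ^ (1 / q) := by
        have hp := hpq.pos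
        refine mul_le_mul_of_nonneg_left (rpow_le_rpow ?_ hφq_le (by simp [hpq.symm.nonneg]))
          (by positivity)
        exact intervalIntegral.integral_nonneg (by norm_num) fun t _ => by positivity

theorem holder_midpoint_constant {p q : ℝ} (hpq : p.HolderConjugate q) {x : ℝ} (hx : 0 ≤ x) :
    ((1 / 2) ^ (p + 1) / (p + 1)) ^ (1 / p) * (x / 8) ^ (1 / q)
      = 1 / 16 * (4 / (p + 1)) ^ (1 / p) * x ^ (1 / q) := by
  have hp := hpq.pos
  have hq : 1 / q = 1 - 1 / p := by simpa only [one_div] using hpq.one_sub_inv.symm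
  rw [show (1 / 2 : ℝ) ^ (p + 1) / (p + 1) = (1 / 2) ^ p * (1 / (2 * (p + 1))) by
      rw [rpow_add_one (by norm_num)]; field_simp,
    show 4 / (p + 1) = 8 * (1 / (2 * (p + 1))) by field_simp; norm_num,
    mul_rpow (by positivity) (by positivity), mul_rpow (by norm_num) (by positivity),
    ← rpow_mul (by norm_num), mul_one_div_cancel hp.ne', rpow_one, div_rpow hx (by norm_num), hq,
    rpow_sub (by norm_num : (0 : ℝ) < 8), rpow_one]
  field_simp
  ring

theorem abs_integral_sub_midpoint_le {p q : ℝ} (hpq : p.HolderConjugate q) {g φ : ℝ → ℝ}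
    (hg : ∀ t ∈ Icc (0 : ℝ) 1, HasDerivAt g (φ t) t) (hφ : Measurable φ) {A B : ℝ}
    (hbound : ∀ t ∈ Icc (0 : ℝ) 1, |φ t| ^ q ≤ (1 - t) * A + t * B) :
    |(∫ t in (0 : ℝ)..1, g t) - g (1 / 2)|
      ≤ 1 / 16 * (4 / (p + 1)) ^ (1 / p) * ((3 * A + B) ^ (1 / q) + (A + 3 * B) ^ (1 / q)) := by
  have hA : 0 ≤ A := by simpa using (rpow_nonneg (abs_nonneg _) _).trans (hbound 0 (by simp))
  have hB : 0 ≤ B := by simpa using (rpow_nonneg (abs_nonneg _) _).trans (hbound 1 (by simp))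
  have hφ_int : IntervalIntegrable φ volume 0 1 := by
    rw [intervalIntegrable_iff_integrableOn_Ioc_of_le zero_le_one]
    refine (memLp_of_abs_rpow_le (ψ := fun t => (1 - t) * A + t * B) hpq.symm.pos
      hφ.aestronglyMeasurable (Continuous.integrableOn_Ioc (by fun_prop)) ?_).integrable
      (by simpa using hpq.symm.lt.le)
    filter_upwards [ae_restrict_mem measurableSet_Ioc] with t ht
    exact hbound t (Ioc_subset_Icc_self ht)
  have hleft : |∫ t in (0 : ℝ)..(1 / 2), t * φ t|
      ≤ ((1 / 2) ^ (p + 1) / (p + 1)) ^ (1 / p) * ((3 * A + B) / 8) ^ (1 / q) := by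
    refine (abs_integral_le_integral_abs (by norm_num)).trans (le_of_eq_of_le ?_
      (integral_mul_abs_le_of_rpow_le_affine hpq hφ fun t ht =>
        hbound t ⟨ht.1, by linarith [ht.2]⟩))
    refine intervalIntegral.integral_congr fun t ht => ?_
    rw [uIcc_of_le (by norm_num)] at ht
    simp [abs_mul, abs_of_nonneg ht.1]
  have hright : |∫ t in (1 / 2 : ℝ)..1, (t - 1) * φ t|
      ≤ ((1 / 2) ^ (p + 1) / (p + 1)) ^ (1 / p) * ((3 * B + A) / 8) ^ (1 / q) := by
    refine (abs_integral_le_integral_abs (by norm_num)).trans (le_of_eq_of_le ?_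
      (integral_mul_abs_le_of_rpow_le_affine hpq
        (hφ.comp (measurable_const.sub measurable_id) : Measurable fun s => φ (1 - s)) fun s hs =>
          (hbound (1 - s) ⟨by linarith [hs.2], by linarith [hs.1]⟩).trans_eq (by ring)))
    have hreflect := intervalIntegral.integral_comp_sub_left (fun t => |(t - 1) * φ t|)
      (a := 0) (b := 1 / 2) 1
    rw [show (1 : ℝ) - 1 / 2 = 1 / 2 by norm_num, sub_zero] at hreflect
    rw [← hreflect]
    refine intervalIntegral.integral_congr fun s hs => ?_
    rw [uIcc_of_le (by norm_num)] at hs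
    simp [abs_mul, abs_of_nonneg hs.1]
  rw [integral_sub_eq_neg_integral_mul_deriv ⟨by norm_num, by norm_num⟩ hg hφ_int, abs_neg]
  calc _ ≤ _ := abs_add_le _ _
    _ ≤ _ := add_le_add hleft hright
    _ = _ := by
      rw [holder_midpoint_constant hpq (by positivity),
        holder_midpoint_constant hpq (by positivity)]
      ring_nf

theorem hh_left_preinvex_pow_deriv_general
    (K : Set ℝ) (η : ℝ → ℝ → ℝ)
    (f f' : ℝ → ℝ) (a b : ℝ) (p : ℝ) (hp : 1 < p)
    (hinvex : ∀ t ∈ Set.Icc (0 : ℝ) 1, a + t * η b a ∈ K)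
    (hf : ∀ x ∈ K, HasDerivAt f (f' x) x)
    (hη : 0 < η b a)
    (hpre : ∀ t ∈ Set.Icc (0 : ℝ) 1,
      |f' (a + t * η b a)| ^ (p / (p - 1))
        ≤ (1 - t) * |f' a| ^ (p / (p - 1)) + t * |f' b| ^ (p / (p - 1))) :
    |(1 / η b a) * (∫ x in a..(a + η b a), f x) - f ((2 * a + η b a) / 2)|
      ≤ (η b a / 16) * (4 / (p + 1)) ^ (1 / p) *
        ((3 * |f' a| ^ (p / (p - 1)) + |f' b| ^ (p / (p - 1))) ^ ((p - 1) / p) +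
         (|f' a| ^ (p / (p - 1)) + 3 * |f' b| ^ (p / (p - 1))) ^ ((p - 1) / p)) := by
  set h := η b a
  -- `deriv f` agrees with `f'` along the path and, unlike `f'`, is measurable.
  have hf_path : ∀ t ∈ Icc (0 : ℝ) 1,
      HasDerivAt (fun t => f (a + t * h) / h) (deriv f (a + t * h)) t := by
    intro t ht
    have hf_t := hf _ (hinvex t ht)
    rw [hf_t.deriv]
    simpa [hη.ne'] using
      (hf_t.comp t (((hasDerivAt_id' t).mul_const h).const_add a)).div_const h
  have hbound : ∀ t ∈ Icc (0 : ℝ) 1, |deriv f (a + t * h)| ^ (p / (p - 1))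
      ≤ (1 - t) * |f' a| ^ (p / (p - 1)) + t * |f' b| ^ (p / (p - 1)) := fun t ht => by
    rw [(hf _ (hinvex t ht)).deriv]
    exact hpre t ht
  have hpq : p.HolderConjugate (p / (p - 1)) := .conjExponent hp
  have hkey := abs_integral_sub_midpoint_le hpq hf_path
    ((measurable_deriv f).comp (by fun_prop)) hbound
  rw [one_div_div] at hkey
  have hrescale : (1 / h) * (∫ x in a..(a + h), f x) - f ((2 * a + h) / 2)
      = h * ((∫ t in (0 : ℝ)..1, f (a + t * h) / h) - f (a + 1 / 2 * h) / h) := by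
    rw [intervalIntegral.integral_div, show (2 * a + h) / 2 = a + 1 / 2 * h by ring]
    simp only [mul_comm _ h]
    rw [intervalIntegral.integral_comp_add_mul f hη.ne', mul_zero, add_zero, mul_one, smul_eq_mul]
    field_simp
  rw [hrescale, abs_mul, abs_of_pos hη]
  calc _ ≤ _ := mul_le_mul_of_nonneg_left hkey hη.le
    _ = _ := by ring

theorem hh_left_preinvex_pow_deriv
    (K : Set ℝ) (hK : IsOpen K) (η : ℝ → ℝ → ℝ)
    (f f' : ℝ → ℝ) (a b : ℝ) (p : ℝ) (hp : 1 < p)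
    (hinvex : ∀ t ∈ Set.Icc (0 : ℝ) 1, a + t * η b a ∈ K)
    (hf : ∀ x ∈ K, HasDerivAt f (f' x) x)
    (hη : 0 < η b a)
    (hpre : ∀ t ∈ Set.Icc (0 : ℝ) 1,
      |f' (a + t * η b a)| ^ (p / (p - 1))
        ≤ (1 - t) * |f' a| ^ (p / (p - 1)) + t * |f' b| ^ (p / (p - 1))) :
    |(1 / η b a) * (∫ x in a..(a + η b a), f x) - f ((2 * a + η b a) / 2)|
      ≤ (η b a / 16) * (4 / (p + 1)) ^ (1 / p) *
        ((3 * |f' a| ^ (p / (p - 1)) + |f' b| ^ (p / (p - 1))) ^ ((p - 1) / p) +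
         (|f' a| ^ (p / (p - 1)) + 3 * |f' b| ^ (p / (p - 1))) ^ ((p - 1) / p)) :=
  hh_left_preinvex_pow_deriv_general K η f f' a b p hp hinvex hf hη hpre
end

section
/- Under the same setup with p > 1 and |f'|^{p/(p-1)} preinvex: |(1/η(b,a)) ∫_a^{a+η(b,a)} f(x) dx − f((2a+η(b,a))/2)| ≤ (η(b,a)/16)(4/(p+1))^{1/p} (3^{(p-1)/p} + 1)(|f'(a)| + |f'(b)|). -/
/-!
With `g t = f (a + t * η b a)` the left side is `|∫₀¹ g - g (1/2)|`. Integration by parts against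
the kernel `t` on `[0, 1/2]` and `t - 1` on `[1/2, 1]` turns it into `η b a` times the integral of
that kernel against `f' (a + t * η b a)`. On `[0, 1/2]` Hölder's inequality with exponents `p` and
`q = p / (p - 1)` bounds this by `(∫ t ^ p) ^ (1/p) * (∫ |f'| ^ q) ^ (1/q)`; preinvexity bounds the
second integral by `(3 |f' a| ^ q + |f' b| ^ q) / 8`, and subadditivity of `x ↦ x ^ (1/q)` pulls the
root back onto `|f' a|` and `|f' b|`. The half `[1/2, 1]` is the same estimate after the reflection
`t ↦ 1 - t`, which exchanges the roles of `a` and `b`.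
-/

open MeasureTheory intervalIntegral Set

theorem abs_intervalIntegral_mul_le_Lp_mul_Lq {p q : ℝ} (hpq : p.HolderConjugate q) {u v : ℝ}
    (huv : u ≤ v) {w φ : ℝ → ℝ}
    (hw : MemLp w (ENNReal.ofReal p) (volume.restrict (Ioc u v)))
    (hφ : MemLp φ (ENNReal.ofReal q) (volume.restrict (Ioc u v))) :
    |∫ t in u..v, w t * φ t|
      ≤ (∫ t in u..v, |w t| ^ p) ^ (1 / p) * (∫ t in u..v, |φ t| ^ q) ^ (1 / q) := by
  simp only [integral_of_le huv, ← Real.norm_eq_abs]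
  exact (MeasureTheory.norm_integral_le_integral_norm _).trans (by
    simpa only [norm_mul] using integral_mul_norm_le_Lp_mul_Lq hpq hw hφ)

theorem memLp_restrict_Ioc_of_abs_rpow_le {q u v : ℝ} (hq : 0 < q) (huv : u ≤ v)
    {φ h : ℝ → ℝ} (hφ : Measurable φ) (hh : IntervalIntegrable h volume u v)
    (hφh : ∀ t ∈ Icc u v, |φ t| ^ q ≤ h t) :
    MemLp φ (ENNReal.ofReal q) (volume.restrict (Ioc u v)) := by
  rw [← integrable_norm_rpow_iff hφ.aestronglyMeasurable (by simpa using hq)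
    ENNReal.ofReal_ne_top, ENNReal.toReal_ofReal hq.le]
  refine ((intervalIntegrable_iff_integrableOn_Ioc_of_le huv).1 hh).mono'
    (hφ.norm.pow_const q).aestronglyMeasurable ?_
  rw [ae_restrict_iff' measurableSet_Ioc]
  refine .of_forall fun t ht => ?_
  rw [Real.norm_of_nonneg (by positivity)]
  exact hφh t (Ioc_subset_Icc_self ht)

theorem abs_integral_mul_le_of_abs_rpow_le {p q A B : ℝ} (hpq : p.HolderConjugate q)
    {φ : ℝ → ℝ} (hφ : Measurable φ)
    (hφ_le : ∀ t ∈ Icc (0 : ℝ) (1 / 2), |φ t| ^ q ≤ (1 - t) * A + t * B) :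
    |∫ t in (0 : ℝ)..1 / 2, t * φ t|
      ≤ ((1 / 2 : ℝ) ^ (p + 1) / (p + 1)) ^ (1 / p) * ((3 * A + B) / 8) ^ (1 / q) := by
  have : IsFiniteMeasure (volume.restrict (Ioc (0 : ℝ) (1 / 2))) :=
    isFiniteMeasure_restrict.2 measure_Ioc_lt_top.ne
  have hid : MemLp (fun t : ℝ => t) (ENNReal.ofReal p) (volume.restrict (Ioc (0 : ℝ) (1 / 2))) := by
    refine MemLp.of_bound measurable_id.aestronglyMeasurable (1 / 2) ?_
    rw [ae_restrict_iff' measurableSet_Ioc]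
    exact .of_forall fun t ht => by rw [Real.norm_eq_abs, abs_of_pos ht.1]; exact ht.2
  have hφ_memLp := memLp_restrict_Ioc_of_abs_rpow_le hpq.symm.pos (by norm_num) hφ
    ((by fun_prop : Continuous fun t : ℝ => (1 - t) * A + t * B).intervalIntegrable _ _) hφ_le
  have hφq_int : IntervalIntegrable (fun t => |φ t| ^ q) volume 0 (1 / 2) := by
    rw [intervalIntegrable_iff_integrableOn_Ioc_of_le (by norm_num), IntegrableOn]
    simpa only [Real.norm_eq_abs, ENNReal.toReal_ofReal hpq.symm.nonneg]
      using hφ_memLp.integrable_norm_rpow'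
  have hweight : ∫ t in (0 : ℝ)..1 / 2, |t| ^ p = (1 / 2 : ℝ) ^ (p + 1) / (p + 1) := by
    rw [integral_congr (g := fun t => t ^ p) fun t ht => ?_,
      integral_rpow (Or.inl (by linarith [hpq.lt])), Real.zero_rpow (by linarith [hpq.lt]),
      sub_zero]
    rw [uIcc_of_le (by norm_num)] at ht
    simp only [abs_of_nonneg ht.1]
  have hφ_integral : ∫ t in (0 : ℝ)..1 / 2, |φ t| ^ q ≤ (3 * A + B) / 8 := by
    calc _ ≤ ∫ t in (0 : ℝ)..1 / 2, ((1 - t) * A + t * B) :=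
          integral_mono_on (by norm_num) hφq_int
            ((by fun_prop : Continuous fun t : ℝ => (1 - t) * A + t * B).intervalIntegrable _ _)
            hφ_le
      _ = ∫ t in (0 : ℝ)..1 / 2, (A + t * (B - A)) := by congr 1; ext t; ring
      _ = (3 * A + B) / 8 := by
          rw [integral_add intervalIntegrable_const
            ((continuous_mul_const (B - A)).intervalIntegrable _ _)]
          simp only [intervalIntegral.integral_const, intervalIntegral.integral_mul_const,
            integral_id, smul_eq_mul]
          ring
  calc _ ≤ _ := abs_intervalIntegral_mul_le_Lp_mul_Lq hpq (by norm_num) hid hφ_memLp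
    _ ≤ _ := by
      rw [hweight]
      refine mul_le_mul_of_nonneg_left (Real.rpow_le_rpow ?_ hφ_integral ?_) (Real.rpow_nonneg ?_ _)
      · exact integral_nonneg (by norm_num) fun t _ => by positivity
      · exact one_div_nonneg.2 hpq.symm.nonneg
      · exact div_nonneg (by positivity) (by linarith [hpq.lt])

theorem mul_rpow_add_mul_rpow_rpow_one_div_le {q c d x y : ℝ} (hq : 1 ≤ q) (hc : 0 ≤ c)
    (hd : 0 ≤ d) (hx : 0 ≤ x) (hy : 0 ≤ y) :
    (c * x ^ q + d * y ^ q) ^ (1 / q) ≤ c ^ (1 / q) * x + d ^ (1 / q) * y := by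
  have hroot : ∀ {c x : ℝ}, 0 ≤ c → 0 ≤ x → (c * x ^ q) ^ (1 / q) = c ^ (1 / q) * x :=
    fun hc hx => by
      rw [Real.mul_rpow hc (by positivity), ← Real.rpow_mul hx,
        mul_one_div_cancel (by linarith), Real.rpow_one]
  calc _ ≤ (c * x ^ q) ^ (1 / q) + (d * y ^ q) ^ (1 / q) :=
        Real.rpow_add_le_add_rpow (by positivity) (by positivity) (by positivity)
          ((div_le_one (by linarith)).2 hq)
    _ = _ := by rw [hroot hc hx, hroot hd hy]

theorem half_rpow_div_rpow_mul_eighth_rpow_eq {p q : ℝ} (hpq : p.HolderConjugate q) :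
    ((1 / 2 : ℝ) ^ (p + 1) / (p + 1)) ^ (1 / p) * (1 / 8 : ℝ) ^ (1 / q)
      = 1 / 16 * (4 / (p + 1)) ^ (1 / p) := by
  have hp : 0 < p := hpq.pos
  have hp1 : 0 < p + 1 := by linarith
  have h1q : 1 / q = 1 - 1 / p := by rw [one_div, one_div, hpq.one_sub_inv]
  calc _ = ((1 / 2 : ℝ) ^ p) ^ (1 / p) * ((1 / 2) / (p + 1)) ^ (1 / p)
        * ((1 / 8) / (1 / 8 : ℝ) ^ (1 / p)) := by
          rw [Real.rpow_add_one (by norm_num), mul_div_assoc,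
            Real.mul_rpow (by positivity) (by positivity), h1q,
            Real.rpow_sub (by norm_num), Real.rpow_one]
    _ = 1 / 16 * ((1 / 2) / (p + 1) / (1 / 8)) ^ (1 / p) := by
          rw [← Real.rpow_mul (by norm_num), mul_one_div_cancel hp.ne', Real.rpow_one,
            Real.div_rpow (div_pos (by norm_num) hp1).le (by norm_num)]
          ring
    _ = _ := by congr 2; field_simp; norm_num

theorem abs_integral_mul_add_abs_integral_sub_one_mul_le {p q α β : ℝ}
    (hpq : p.HolderConjugate q) {φ : ℝ → ℝ} (hφ : Measurable φ) (hα : 0 ≤ α) (hβ : 0 ≤ β)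
    (hφ_le : ∀ t ∈ Icc (0 : ℝ) 1, |φ t| ^ q ≤ (1 - t) * α ^ q + t * β ^ q) :
    |∫ t in (0 : ℝ)..1 / 2, t * φ t| + |∫ t in (1 / 2 : ℝ)..1, (t - 1) * φ t|
      ≤ 1 / 16 * (4 / (p + 1)) ^ (1 / p) * (3 ^ (1 / q) + 1) * (α + β) := by
  set D : ℝ := ((1 / 2 : ℝ) ^ (p + 1) / (p + 1)) ^ (1 / p)
  have hD : 0 ≤ D := Real.rpow_nonneg (div_nonneg (by positivity) (by linarith [hpq.lt])) _
  have hroot : ∀ x y : ℝ, 0 ≤ x → 0 ≤ y →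
      ((3 * x ^ q + y ^ q) / 8) ^ (1 / q) ≤ (1 / 8 : ℝ) ^ (1 / q) * (3 ^ (1 / q) * x + y) :=
    fun x y hx hy => by
      calc _ = (3 / 8 * x ^ q + 1 / 8 * y ^ q) ^ (1 / q) := by congr 1; ring
        _ ≤ (3 / 8 : ℝ) ^ (1 / q) * x + (1 / 8 : ℝ) ^ (1 / q) * y :=
          mul_rpow_add_mul_rpow_rpow_one_div_le hpq.symm.lt.le (by norm_num) (by norm_num) hx hy
        _ = _ := by
          rw [show (3 / 8 : ℝ) = 3 * (1 / 8) by norm_num, Real.mul_rpow (by norm_num) (by norm_num)]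
          ring
  have hleft := abs_integral_mul_le_of_abs_rpow_le hpq hφ
    fun t ht => hφ_le t ⟨ht.1, ht.2.trans (by norm_num)⟩
  have hright := abs_integral_mul_le_of_abs_rpow_le hpq (φ := fun t => φ (1 - t))
    (A := β ^ q) (B := α ^ q) (hφ.comp (by fun_prop)) fun t ht => by
      convert hφ_le (1 - t) ⟨by linarith [ht.2], by linarith [ht.1]⟩ using 1
      ring
  have hreflect : ∫ t in (1 / 2 : ℝ)..1, (t - 1) * φ t = -∫ t in (0 : ℝ)..1 / 2, t * φ (1 - t) := by
    rw [← intervalIntegral.integral_neg]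
    calc _ = ∫ t in (1 : ℝ) - 1 / 2..1 - 0, (t - 1) * φ t := by norm_num
      _ = _ := by
        rw [← integral_comp_sub_left fun t => (t - 1) * φ t]
        congr 1; ext t; ring
  rw [hreflect, abs_neg]
  calc _ ≤ D * ((3 * α ^ q + β ^ q) / 8) ^ (1 / q) + D * ((3 * β ^ q + α ^ q) / 8) ^ (1 / q) :=
        add_le_add hleft hright
    _ ≤ D * ((1 / 8 : ℝ) ^ (1 / q) * (3 ^ (1 / q) * α + β))
        + D * ((1 / 8 : ℝ) ^ (1 / q) * (3 ^ (1 / q) * β + α)) := by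
        gcongr
        · exact hroot _ _ hα hβ
        · exact hroot _ _ hβ hα
    _ = D * (1 / 8 : ℝ) ^ (1 / q) * (3 ^ (1 / q) + 1) * (α + β) := by ring
    _ = _ := by rw [half_rpow_div_rpow_mul_eighth_rpow_eq hpq]

theorem integral_eq_sub_mul_apply_sub_integral_kernel_mul_deriv {g g' : ℝ → ℝ} {u m v : ℝ}
    (hum : u ≤ m) (hmv : m ≤ v) (hg : ∀ t ∈ Icc u v, HasDerivAt g (g' t) t)
    (hg' : IntervalIntegrable g' volume u v) :
    ∫ t in u..v, g t
      = (v - u) * g m - ((∫ t in u..m, (t - u) * g' t) + ∫ t in m..v, (t - v) * g' t) := by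
  have hsub : ∀ {x y}, u ≤ x → x ≤ y → y ≤ v → uIcc x y ⊆ uIcc u v := fun hx hxy hy => by
    rw [uIcc_of_le hxy, uIcc_of_le (hx.trans (hxy.trans hy))]
    exact Icc_subset_Icc hx hy
  have hg_uIcc : ∀ t ∈ uIcc u v, HasDerivAt g (g' t) t := by
    rwa [uIcc_of_le (hum.trans hmv)]
  have hg_int : ∀ {x y}, u ≤ x → x ≤ y → y ≤ v → IntervalIntegrable g volume x y :=
    fun hx hxy hy => ContinuousOn.intervalIntegrable fun t ht =>
      (hg_uIcc t (hsub hx hxy hy ht)).continuousAt.continuousWithinAt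
  have hparts : ∀ {x y} (c : ℝ), u ≤ x → x ≤ y → y ≤ v →
      ∫ t in x..y, (t - c) * g' t = (y - c) * g y - (x - c) * g x - ∫ t in x..y, g t :=
    fun c hx hxy hy => by
      simpa only [one_mul, id] using integral_mul_deriv_eq_deriv_mul
        (fun t _ => (hasDerivAt_id t).sub_const c)
        (fun t ht => hg_uIcc t (hsub hx hxy hy ht))
        intervalIntegrable_const (hg'.mono_set (hsub hx hxy hy))
  rw [← integral_add_adjacent_intervals (hg_int le_rfl hum hmv) (hg_int hum hmv le_rfl),
    hparts u le_rfl hum hmv, hparts v hum hmv le_rfl]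
  ring

theorem average_sub_apply_midpoint_eq {f f' : ℝ → ℝ} {a c : ℝ} (hc : c ≠ 0)
    (hf : ∀ t ∈ Icc (0 : ℝ) 1, HasDerivAt f (f' (a + t * c)) (a + t * c))
    (hf' : IntervalIntegrable (fun t => f' (a + t * c)) volume 0 1) :
    1 / c * (∫ x in a..a + c, f x) - f ((2 * a + c) / 2)
      = -(c * ((∫ t in (0 : ℝ)..1 / 2, t * f' (a + t * c))
          + ∫ t in (1 / 2 : ℝ)..1, (t - 1) * f' (a + t * c))) := by
  have hg : ∀ t ∈ Icc (0 : ℝ) 1, HasDerivAt (fun t => f (a + t * c)) (c * f' (a + t * c)) t :=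
    fun t ht => by
      rw [mul_comm]
      simpa [Function.comp_def] using
        (hf t ht).comp t (((hasDerivAt_id t).mul_const c).const_add a)
  have hmean : 1 / c * ∫ x in a..a + c, f x = ∫ t in (0 : ℝ)..1, f (a + t * c) := by
    simp only [mul_comm _ c, integral_comp_add_mul f hc, mul_zero, add_zero, mul_one,
      smul_eq_mul, one_div]
  rw [hmean, integral_eq_sub_mul_apply_sub_integral_kernel_mul_deriv (m := 1 / 2) (by norm_num)
    (by norm_num) hg (hf'.const_mul c), show (2 * a + c) / 2 = a + 1 / 2 * c by ring]
  simp only [sub_zero, mul_left_comm _ c, intervalIntegral.integral_const_mul]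
  ring

theorem hh_left_preinvex_pow_deriv_simplified_general
    (K : Set ℝ) (η : ℝ → ℝ → ℝ)
    (f f' : ℝ → ℝ) (a b : ℝ) (p : ℝ) (hp : 1 < p)
    (hinvex : ∀ t ∈ Set.Icc (0 : ℝ) 1, a + t * η b a ∈ K)
    (hf : ∀ x ∈ K, HasDerivAt f (f' x) x)
    (hη : 0 < η b a)
    (hpre : ∀ t ∈ Set.Icc (0 : ℝ) 1,
      |f' (a + t * η b a)| ^ (p / (p - 1))
        ≤ (1 - t) * |f' a| ^ (p / (p - 1)) + t * |f' b| ^ (p / (p - 1))) :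
    |(1 / η b a) * (∫ x in a..(a + η b a), f x) - f ((2 * a + η b a) / 2)|
      ≤ (η b a / 16) * (4 / (p + 1)) ^ (1 / p) * ((3 : ℝ) ^ ((p - 1) / p) + 1) *
        (|f' a| + |f' b|) := by
  set c := η b a
  set q := p / (p - 1)
  have hpq : p.HolderConjugate q := Real.HolderConjugate.conjExponent hp
  -- `deriv f` is measurable, unlike the arbitrary `f'`, and agrees with `f'` on the segment.
  set φ : ℝ → ℝ := fun t => deriv f (a + t * c)
  have hφ_meas : Measurable φ := (measurable_deriv f).comp (by fun_prop)
  have hφ_le : ∀ t ∈ Icc (0 : ℝ) 1, |φ t| ^ q ≤ (1 - t) * |f' a| ^ q + t * |f' b| ^ q :=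
    fun t ht => by
      simpa only [φ, (hf _ (hinvex t ht)).deriv] using hpre t ht
  have hφ_int : IntervalIntegrable φ volume 0 1 := by
    rw [intervalIntegrable_iff_integrableOn_Ioc_of_le zero_le_one]
    exact (memLp_restrict_Ioc_of_abs_rpow_le hpq.symm.pos zero_le_one hφ_meas
      ((by fun_prop : Continuous fun t : ℝ => (1 - t) * |f' a| ^ q + t * |f' b| ^ q)
        |>.intervalIntegrable _ _) hφ_le).integrable (ENNReal.one_le_ofReal.2 hpq.symm.lt.le)
  rw [average_sub_apply_midpoint_eq hη.ne'
      (fun t ht => (hf _ (hinvex t ht)).differentiableAt.hasDerivAt) hφ_int,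
    abs_neg, abs_mul, abs_of_pos hη]
  calc _ ≤ c * (|∫ t in (0 : ℝ)..1 / 2, t * φ t| + |∫ t in (1 / 2 : ℝ)..1, (t - 1) * φ t|) := by
        gcongr
        exact abs_add_le _ _
    _ ≤ c * (1 / 16 * (4 / (p + 1)) ^ (1 / p) * (3 ^ (1 / q) + 1) * (|f' a| + |f' b|)) := by
        gcongr
        exact abs_integral_mul_add_abs_integral_sub_one_mul_le hpq hφ_meas (abs_nonneg _)
          (abs_nonneg _) hφ_le
    _ = _ := by
        rw [one_div_div]
        ring

theorem hh_left_preinvex_pow_deriv_simplified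
    (K : Set ℝ) (hK : IsOpen K) (η : ℝ → ℝ → ℝ)
    (f f' : ℝ → ℝ) (a b : ℝ) (p : ℝ) (hp : 1 < p)
    (hinvex : ∀ t ∈ Set.Icc (0 : ℝ) 1, a + t * η b a ∈ K)
    (hf : ∀ x ∈ K, HasDerivAt f (f' x) x)
    (hη : 0 < η b a)
    (hpre : ∀ t ∈ Set.Icc (0 : ℝ) 1,
      |f' (a + t * η b a)| ^ (p / (p - 1))
        ≤ (1 - t) * |f' a| ^ (p / (p - 1)) + t * |f' b| ^ (p / (p - 1))) :
    |(1 / η b a) * (∫ x in a..(a + η b a), f x) - f ((2 * a + η b a) / 2)|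
      ≤ (η b a / 16) * (4 / (p + 1)) ^ (1 / p) * ((3 : ℝ) ^ ((p - 1) / p) + 1) *
        (|f' a| + |f' b|) :=
  hh_left_preinvex_pow_deriv_simplified_general K η f f' a b p hp hinvex hf hη hpre
end

section
/- Under the hypotheses of the previous theorem (q ≥ 1, |f'|^q preinvex): |(1/η(b,a)) ∫_a^{a+η(b,a)} f(x) dx − f((2a+η(b,a))/2)| ≤ (η(b,a)/8)·((2^{1/q} + 1)/3^{1/q})·(|f'(a)| + |f'(b)|). -/
/-! Put `φ t = f (a + t η)`. Integrating by parts against the kernel `t` on `[0, 1/2]` and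
`t - 1` on `[1/2, 1]` gives `φ (1/2) - ∫₀¹ φ = ∫₀^{1/2} t φ' + ∫_{1/2}^1 (t - 1) φ'`. On each half,
Hölder's inequality with weight `t` bounds `∫ t |φ'|` by `(∫ t)^{1 - 1/q} (∫ t |φ'|^q)^{1/q}`, and
the preinvexity bound on `|φ'|^q` makes the last integral an explicit polynomial integral. -/

open MeasureTheory intervalIntegral Set

theorem abs_le_max_of_rpow_le {x A B q t : ℝ} (hq : 0 < q) (hA : 0 ≤ A) (hB : 0 ≤ B)
    (ht : t ∈ Icc (0 : ℝ) 1) (h : |x| ^ q ≤ (1 - t) * A ^ q + t * B ^ q) :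
    |x| ≤ max A B := by
  have hAM := Real.rpow_le_rpow hA (le_max_left A B) hq.le
  have hBM := Real.rpow_le_rpow hB (le_max_right A B) hq.le
  refine (Real.rpow_le_rpow_iff (abs_nonneg x) (hA.trans (le_max_left A B)) hq).1 (h.trans ?_)
  nlinarith [ht.1, ht.2]

theorem memLp_ofReal_of_integrable_rpow {α : Type*} [MeasurableSpace α] {μ : Measure α}
    {r : ℝ} (hr : 0 < r) {F : α → ℝ} (hF : 0 ≤ᵐ[μ] F) (hF_meas : AEStronglyMeasurable F μ)
    (hF_int : Integrable (fun x => F x ^ r) μ) : MemLp F (ENNReal.ofReal r) μ := by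
  refine (integrable_norm_rpow_iff hF_meas (by simpa using hr) ENNReal.ofReal_ne_top).1 ?_
  refine hF_int.congr ?_
  filter_upwards [hF] with x hx
  rw [Real.norm_of_nonneg hx, ENNReal.toReal_ofReal hr.le]

/-- Hölder's inequality for the exponents `q / (q - 1)` and `q`, applied to `w ^ (1 - 1/q)` and
`w ^ (1/q) * u`. -/
theorem integral_mul_le_integral_rpow_mul {α : Type*} [MeasurableSpace α] {μ : Measure α}
    {w u : α → ℝ} {q : ℝ} (hq : 1 ≤ q) (hw : 0 ≤ᵐ[μ] w) (hu : 0 ≤ᵐ[μ] u)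
    (hw_int : Integrable w μ) (hu_meas : AEStronglyMeasurable u μ)
    (hwu_int : Integrable (fun x => w x * u x ^ q) μ) :
    ∫ x, w x * u x ∂μ ≤ (∫ x, w x ∂μ) ^ (1 - 1 / q) * (∫ x, w x * u x ^ q ∂μ) ^ (1 / q) := by
  rcases hq.eq_or_lt with rfl | hq
  · simp
  set p := q.conjExponent
  have hpq : p.HolderConjugate q := (Real.HolderConjugate.conjExponent hq).symm
  have hp_inv : 1 - 1 / q = 1 / p := by simpa only [one_div] using hpq.symm.one_sub_inv
  have hp_exp : 0 ≤ 1 / p := one_div_nonneg.2 hpq.pos.le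
  have hq_exp : 0 ≤ 1 / q := one_div_nonneg.2 hpq.symm.pos.le
  have hw_meas := hw_int.aestronglyMeasurable
  have hF : 0 ≤ᵐ[μ] fun x => w x ^ (1 / p) := hw.mono fun x hx => Real.rpow_nonneg hx _
  have hG : 0 ≤ᵐ[μ] fun x => w x ^ (1 / q) * u x :=
    hw.mp (hu.mono fun x hux hwx => mul_nonneg (Real.rpow_nonneg hwx _) hux)
  have hFp : (fun x => (w x ^ (1 / p)) ^ p) =ᵐ[μ] w := hw.mono fun x hx => by
    simp only [← Real.rpow_mul hx, one_div_mul_cancel hpq.pos.ne', Real.rpow_one]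
  have hGq : (fun x => (w x ^ (1 / q) * u x) ^ q) =ᵐ[μ] fun x => w x * u x ^ q :=
    hw.mp (hu.mono fun x hux hwx => by
      simp only [Real.mul_rpow (Real.rpow_nonneg hwx _) hux, ← Real.rpow_mul hwx,
        one_div_mul_cancel hpq.symm.pos.ne', Real.rpow_one])
  have hFG : (fun x => w x ^ (1 / p) * (w x ^ (1 / q) * u x)) =ᵐ[μ] fun x => w x * u x :=
    hw.mono fun x hx => by
      dsimp only
      rw [← mul_assoc, ← Real.rpow_add' hx (by rw [← hp_inv]; simp), ← hp_inv, sub_add_cancel,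
        Real.rpow_one]
  have holder := integral_mul_le_Lp_mul_Lq_of_nonneg hpq hF hG
    (memLp_ofReal_of_integrable_rpow hpq.pos hF (by fun_prop) (hw_int.congr hFp.symm))
    (memLp_ofReal_of_integrable_rpow hpq.symm.pos hG (by fun_prop) (hwu_int.congr hGq.symm))
  rwa [integral_congr_ae hFG, integral_congr_ae hFp, integral_congr_ae hGq, ← hp_inv] at holder

theorem midpoint_sub_integral_eq {φ ψ : ℝ → ℝ}
    (hφ : ∀ t ∈ Icc (0 : ℝ) 1, HasDerivAt φ (ψ t) t) (hψ : IntegrableOn ψ (Icc 0 1)) :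
    φ (1 / 2) - ∫ t in (0 : ℝ)..1, φ t =
      (∫ t in (0 : ℝ)..1 / 2, t * ψ t) + ∫ t in (1 / 2 : ℝ)..1, (t - 1) * ψ t := by
  have hleft_sub : uIcc (0 : ℝ) (1 / 2) ⊆ Icc 0 1 := uIcc_subset_Icc (by norm_num) (by norm_num)
  have hright_sub : uIcc (1 / 2 : ℝ) 1 ⊆ Icc 0 1 := uIcc_subset_Icc (by norm_num) (by norm_num)
  have hφc : ContinuousOn φ (Icc 0 1) := fun t ht => (hφ t ht).continuousAt.continuousWithinAt
  have left := integral_mul_deriv_eq_deriv_mul (u := id) (u' := fun _ => 1)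
    (fun t _ => hasDerivAt_id t) (fun t ht => hφ t (hleft_sub ht)) intervalIntegrable_const
    (hψ.mono_set hleft_sub).intervalIntegrable
  have right := integral_mul_deriv_eq_deriv_mul (u := fun t => t - 1) (u' := fun _ => 1)
    (fun t _ => (hasDerivAt_id t).sub_const 1) (fun t ht => hφ t (hright_sub ht))
    intervalIntegrable_const (hψ.mono_set hright_sub).intervalIntegrable
  have split := integral_add_adjacent_intervals (μ := volume)
    (hφc.mono hleft_sub).intervalIntegrable (hφc.mono hright_sub).intervalIntegrable
  simp only [id, one_mul] at left right
  rw [left, right, ← split]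
  ring

theorem integral_zero_half_mul_affine_eq (C D : ℝ) :
    ∫ t in (0 : ℝ)..1 / 2, t * ((1 - t) * C + t * D) = C / 12 + D / 24 := by
  have hderiv : ∀ t ∈ uIcc (0 : ℝ) (1 / 2),
      HasDerivAt (fun t => C * (t ^ 2 / 2 - t ^ 3 / 3) + D * (t ^ 3 / 3))
        (t * ((1 - t) * C + t * D)) t := fun t _ => by
    have h2 := (hasDerivAt_pow 2 t).div_const 2
    have h3 := (hasDerivAt_pow 3 t).div_const 3
    exact ((h2.sub h3).const_mul C |>.add (h3.const_mul D)).congr_deriv (by push_cast; ring)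
  rw [integral_eq_sub_of_hasDerivAt hderiv (Continuous.intervalIntegrable (by fun_prop) _ _)]
  ring

theorem eighth_rpow_mul_rpow_le {A B q : ℝ} (hq : 1 ≤ q) (hA : 0 ≤ A) (hB : 0 ≤ B) :
    (1 / 8 : ℝ) ^ (1 - 1 / q) * (A ^ q / 12 + B ^ q / 24) ^ (1 / q) ≤
      1 / 8 * ((2 : ℝ) ^ (1 / q) * A + B) / (3 : ℝ) ^ (1 / q) := by
  have hq0 : 0 < q := zero_lt_one.trans_le hq
  have hroot {x : ℝ} (hx : 0 ≤ x) : (x ^ q) ^ (1 / q) = x := by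
    rw [← Real.rpow_mul hx, mul_one_div_cancel hq0.ne', Real.rpow_one]
  have hAq := Real.rpow_nonneg hA q
  have hBq := Real.rpow_nonneg hB q
  have hsubadd : (2 * A ^ q + B ^ q) ^ (1 / q) ≤ (2 : ℝ) ^ (1 / q) * A + B := by
    calc (2 * A ^ q + B ^ q) ^ (1 / q) ≤ (2 * A ^ q) ^ (1 / q) + (B ^ q) ^ (1 / q) :=
          Real.rpow_add_le_add_rpow (by positivity) hBq (by positivity) ((div_le_one hq0).2 hq)
      _ = (2 : ℝ) ^ (1 / q) * A + B := by
          rw [Real.mul_rpow zero_le_two hAq, hroot hA, hroot hB]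
  have hconst : (1 / 8 : ℝ) ^ (1 - 1 / q) * ((1 / 8 : ℝ) * (1 / 3)) ^ (1 / q) =
      1 / 8 / (3 : ℝ) ^ (1 / q) := by
    rw [Real.mul_rpow (by norm_num) (by norm_num), ← mul_assoc, ← Real.rpow_add (by norm_num),
      sub_add_cancel, Real.rpow_one, Real.div_rpow zero_le_one zero_le_three, Real.one_rpow,
      mul_one_div]
  calc (1 / 8 : ℝ) ^ (1 - 1 / q) * (A ^ q / 12 + B ^ q / 24) ^ (1 / q)
      = (1 / 8 : ℝ) ^ (1 - 1 / q) * ((1 / 8 : ℝ) * (1 / 3)) ^ (1 / q) *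
          (2 * A ^ q + B ^ q) ^ (1 / q) := by
        rw [mul_assoc, ← Real.mul_rpow (by norm_num) (by positivity)]
        ring_nf
    _ ≤ 1 / 8 / (3 : ℝ) ^ (1 / q) * ((2 : ℝ) ^ (1 / q) * A + B) := by
        rw [hconst]
        gcongr
    _ = 1 / 8 * ((2 : ℝ) ^ (1 / q) * A + B) / (3 : ℝ) ^ (1 / q) := by ring

theorem integral_abs_mul_le_of_rpow_le {ψ : ℝ → ℝ} (hψ : Measurable ψ) {A B q : ℝ}
    (hq : 1 ≤ q) (hA : 0 ≤ A) (hB : 0 ≤ B)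
    (hbound : ∀ t ∈ Icc (0 : ℝ) (1 / 2), |ψ t| ^ q ≤ (1 - t) * A ^ q + t * B ^ q) :
    ∫ t in (0 : ℝ)..1 / 2, |t * ψ t| ≤
      1 / 8 * ((2 : ℝ) ^ (1 / q) * A + B) / (3 : ℝ) ^ (1 / q) := by
  have hs : (0 : ℝ) ≤ 1 / 2 := by norm_num
  have hpos : ∀ᵐ t ∂volume.restrict (Ioc (0 : ℝ) (1 / 2)), 0 < t :=
    ae_restrict_of_forall_mem measurableSet_Ioc fun t ht => ht.1
  have hweight : ∫ t in Ioc (0 : ℝ) (1 / 2), t = 1 / 8 := by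
    rw [← integral_of_le hs, integral_id]
    norm_num
  have hdom : ∀ t ∈ Ioc (0 : ℝ) (1 / 2), t * |ψ t| ^ q ≤ t * ((1 - t) * A ^ q + t * B ^ q) :=
    fun t ht => mul_le_mul_of_nonneg_left (hbound t (Ioc_subset_Icc_self ht)) ht.1.le
  have hmoment_int : IntegrableOn (fun t => t * |ψ t| ^ q) (Ioc (0 : ℝ) (1 / 2)) := by
    refine Integrable.mono'
      (Continuous.integrableOn_Ioc (f := fun t => t * ((1 - t) * A ^ q + t * B ^ q))
        (by fun_prop))
      (measurable_id.mul (hψ.abs.pow_const q)).aestronglyMeasurable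
      (ae_restrict_of_forall_mem measurableSet_Ioc fun t ht => ?_)
    rw [Real.norm_of_nonneg (mul_nonneg ht.1.le (Real.rpow_nonneg (abs_nonneg _) _))]
    exact hdom t ht
  have hmoment : ∫ t in Ioc (0 : ℝ) (1 / 2), t * |ψ t| ^ q ≤ A ^ q / 12 + B ^ q / 24 := by
    rw [← integral_zero_half_mul_affine_eq, integral_of_le hs]
    exact setIntegral_mono_on hmoment_int (Continuous.integrableOn_Ioc (by fun_prop))
      measurableSet_Ioc hdom
  calc ∫ t in (0 : ℝ)..1 / 2, |t * ψ t|
      = ∫ t in Ioc (0 : ℝ) (1 / 2), t * |ψ t| := by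
        rw [integral_of_le hs]
        refine integral_congr_ae (hpos.mono fun t ht => ?_)
        simp only [abs_mul, abs_of_pos ht]
    _ ≤ (∫ t in Ioc (0 : ℝ) (1 / 2), t) ^ (1 - 1 / q) *
          (∫ t in Ioc (0 : ℝ) (1 / 2), t * |ψ t| ^ q) ^ (1 / q) :=
        integral_mul_le_integral_rpow_mul hq (hpos.mono fun t ht => ht.le)
          (ae_of_all _ fun t => abs_nonneg _) (Continuous.integrableOn_Ioc continuous_id)
          hψ.abs.aestronglyMeasurable hmoment_int
    _ ≤ (1 / 8 : ℝ) ^ (1 - 1 / q) * (A ^ q / 12 + B ^ q / 24) ^ (1 / q) := by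
        rw [hweight]
        gcongr
        exact setIntegral_nonneg measurableSet_Ioc fun t ht =>
          mul_nonneg ht.1.le (Real.rpow_nonneg (abs_nonneg _) _)
    _ ≤ 1 / 8 * ((2 : ℝ) ^ (1 / q) * A + B) / (3 : ℝ) ^ (1 / q) :=
        eighth_rpow_mul_rpow_le hq hA hB

theorem abs_midpoint_sub_integral_le {φ ψ : ℝ → ℝ}
    (hφ : ∀ t ∈ Icc (0 : ℝ) 1, HasDerivAt φ (ψ t) t) (hψ : Measurable ψ) {A B q : ℝ}
    (hq : 1 ≤ q) (hA : 0 ≤ A) (hB : 0 ≤ B)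
    (hbound : ∀ t ∈ Icc (0 : ℝ) 1, |ψ t| ^ q ≤ (1 - t) * A ^ q + t * B ^ q) :
    |φ (1 / 2) - ∫ t in (0 : ℝ)..1, φ t| ≤
      1 / 8 * (((2 : ℝ) ^ (1 / q) + 1) / (3 : ℝ) ^ (1 / q)) * (A + B) := by
  have hψ_int : IntegrableOn ψ (Icc 0 1) :=
    Measure.integrableOn_of_bounded (M := max A B) measure_Icc_lt_top.ne
      hψ.aestronglyMeasurable (ae_restrict_of_forall_mem measurableSet_Icc fun t ht =>
        abs_le_max_of_rpow_le (zero_lt_one.trans_le hq) hA hB ht (hbound t ht))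
  have hleft : |∫ t in (0 : ℝ)..1 / 2, t * ψ t| ≤
      1 / 8 * ((2 : ℝ) ^ (1 / q) * A + B) / (3 : ℝ) ^ (1 / q) :=
    (abs_integral_le_integral_abs (by norm_num)).trans <|
      integral_abs_mul_le_of_rpow_le hψ hq hA hB fun t ht =>
        hbound t ⟨ht.1, ht.2.trans (by norm_num)⟩
  have hright : |∫ t in (1 / 2 : ℝ)..1, (t - 1) * ψ t| ≤
      1 / 8 * ((2 : ℝ) ^ (1 / q) * B + A) / (3 : ℝ) ^ (1 / q) := by
    have hreflect : ∫ t in (1 / 2 : ℝ)..1, |(t - 1) * ψ t| =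
        ∫ t in (0 : ℝ)..1 / 2, |t * ψ (1 - t)| := by
      have h := integral_comp_sub_left (fun t => |(t - 1) * ψ t|) (1 : ℝ) (a := 0) (b := 1 / 2)
      norm_num [abs_mul] at h ⊢
      exact h.symm
    refine (abs_integral_le_integral_abs (by norm_num)).trans (hreflect ▸ ?_)
    exact integral_abs_mul_le_of_rpow_le (hψ.comp (measurable_const.sub measurable_id)) hq hB hA
      fun t ht => (hbound (1 - t) ⟨by linarith [ht.2], by linarith [ht.1]⟩).trans_eq (by ring)
  rw [midpoint_sub_integral_eq hφ hψ_int]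
  calc |(∫ t in (0 : ℝ)..1 / 2, t * ψ t) + ∫ t in (1 / 2 : ℝ)..1, (t - 1) * ψ t|
      ≤ |∫ t in (0 : ℝ)..1 / 2, t * ψ t| + |∫ t in (1 / 2 : ℝ)..1, (t - 1) * ψ t| :=
        abs_add_le _ _
    _ ≤ 1 / 8 * ((2 : ℝ) ^ (1 / q) * A + B) / (3 : ℝ) ^ (1 / q) +
          1 / 8 * ((2 : ℝ) ^ (1 / q) * B + A) / (3 : ℝ) ^ (1 / q) := add_le_add hleft hright
    _ = 1 / 8 * (((2 : ℝ) ^ (1 / q) + 1) / (3 : ℝ) ^ (1 / q)) * (A + B) := by ring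

theorem hh_left_preinvex_q_pow_deriv_simplified_general
    (K : Set ℝ) (η : ℝ → ℝ → ℝ)
    (f f' : ℝ → ℝ) (a b : ℝ) (q : ℝ) (hq : 1 ≤ q)
    (hinvex : ∀ t ∈ Set.Icc (0 : ℝ) 1, a + t * η b a ∈ K)
    (hf : ∀ x ∈ K, HasDerivAt f (f' x) x)
    (hη : 0 < η b a)
    (hpre : ∀ t ∈ Set.Icc (0 : ℝ) 1,
      |f' (a + t * η b a)| ^ q ≤ (1 - t) * |f' a| ^ q + t * |f' b| ^ q) :
    |(1 / η b a) * (∫ x in a..(a + η b a), f x) - f ((2 * a + η b a) / 2)|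
      ≤ (η b a / 8) * (((2 : ℝ) ^ (1 / q) + 1) / (3 : ℝ) ^ (1 / q)) *
        (|f' a| + |f' b|) := by
  set r := η b a
  -- `f'` need not be measurable, but `deriv f` is, and it agrees with `f'` on the segment.
  have hderiv_eq : ∀ t ∈ Icc (0 : ℝ) 1, deriv f (a + t * r) = f' (a + t * r) :=
    fun t ht => (hf _ (hinvex t ht)).deriv
  have hφ : ∀ t ∈ Icc (0 : ℝ) 1,
      HasDerivAt (fun t => f (a + t * r)) (deriv f (a + t * r) * r) t := fun t ht => by
    rw [hderiv_eq t ht]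
    exact (hf _ (hinvex t ht)).comp t (by simpa using ((hasDerivAt_id t).mul_const r).const_add a)
  have hψ : Measurable fun t => deriv f (a + t * r) * r :=
    ((measurable_deriv f).comp (by fun_prop)).mul_const r
  have hbound : ∀ t ∈ Icc (0 : ℝ) 1, |deriv f (a + t * r) * r| ^ q ≤
      (1 - t) * (|f' a| * r) ^ q + t * (|f' b| * r) ^ q := fun t ht => by
    rw [hderiv_eq t ht, abs_mul, abs_of_pos hη]
    simp only [Real.mul_rpow (abs_nonneg _) hη.le]
    nlinarith [mul_le_mul_of_nonneg_right (hpre t ht) (Real.rpow_nonneg hη.le q)]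
  have havg : 1 / r * ∫ x in a..a + r, f x = ∫ t in (0 : ℝ)..1, f (a + t * r) := by
    simp_rw [mul_comm _ r, integral_comp_add_mul f hη.ne', mul_zero, mul_one, add_zero,
      smul_eq_mul, one_div]
  have hmid : f ((2 * a + r) / 2) = f (a + 1 / 2 * r) := by ring_nf
  rw [havg, hmid, abs_sub_comm]
  refine (abs_midpoint_sub_integral_le hφ hψ hq (mul_nonneg (abs_nonneg _) hη.le)
    (mul_nonneg (abs_nonneg _) hη.le) hbound).trans_eq ?_
  ring

theorem hh_left_preinvex_q_pow_deriv_simplified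
    (K : Set ℝ) (hK : IsOpen K) (η : ℝ → ℝ → ℝ)
    (f f' : ℝ → ℝ) (a b : ℝ) (q : ℝ) (hq : 1 ≤ q)
    (hinvex : ∀ t ∈ Set.Icc (0 : ℝ) 1, a + t * η b a ∈ K)
    (hf : ∀ x ∈ K, HasDerivAt f (f' x) x)
    (hη : 0 < η b a)
    (hpre : ∀ t ∈ Set.Icc (0 : ℝ) 1,
      |f' (a + t * η b a)| ^ q ≤ (1 - t) * |f' a| ^ q + t * |f' b| ^ q) :
    |(1 / η b a) * (∫ x in a..(a + η b a), f x) - f ((2 * a + η b a) / 2)|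
      ≤ (η b a / 8) * (((2 : ℝ) ^ (1 / q) + 1) / (3 : ℝ) ^ (1 / q)) *
        (|f' a| + |f' b|) :=
  hh_left_preinvex_q_pow_deriv_simplified_general K η f f' a b q hq hinvex hf hη hpre
end

section
/- Let |f'| be log-preinvex on K with |f'(a)| ≠ |f'(b)| and both positive. Then |(1/η(b,a)) ∫_a^{a+η(b,a)} f(x) dx − f((2a+η(b,a))/2)| ≤ η(b,a)·[ (|f'(b)|^{1/2} − |f'(a)|^{1/2}) / (log|f'(b)| − log|f'(a)|) ]². -/
/-!
Substituting `x = a + t η` turns the left-hand side into `|∫₀¹ (φ t - φ (1/2)) dt|` with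
`φ t = f (a + t η)`. Log-preinvexity gives `|φ'| ≤ η g` for `g t = |f' a|^(1-t) |f' b|^t`, an
exponential in `t` whose primitive `G` is increasing. Since `G - φ` and `G + φ` are then monotone,
`|φ t - φ (1/2)| ≤ |G t - G (1/2)|`, and by monotonicity of `G`
`∫₀¹ |G t - G (1/2)| = ∫_{1/2}^1 G - ∫_0^{1/2} G = η (g 1 - 2 g (1/2) + g 0) / (log |f' b| - log |f' a|)²`,
whose numerator is `(√|f' b| - √|f' a|)²`.
-/

open MeasureTheory intervalIntegral Set Real

lemma abs_sub_le_abs_sub_of_abs_hasDerivAt_le {D : Set ℝ} (hD : Convex ℝ D)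
    {φ G φ' G' : ℝ → ℝ} (hφ : ∀ x ∈ D, HasDerivAt φ (φ' x) x)
    (hG : ∀ x ∈ D, HasDerivAt G (G' x) x) (hle : ∀ x ∈ D, |φ' x| ≤ G' x)
    {x y : ℝ} (hx : x ∈ D) (hy : y ∈ D) :
    |φ x - φ y| ≤ |G x - G y| := by
  have hcont : ∀ {F F' : ℝ → ℝ}, (∀ x ∈ D, HasDerivAt F (F' x) x) → ContinuousOn F D :=
    fun hF x hx => (hF x hx).continuousAt.continuousWithinAt
  have hsub : MonotoneOn (G - φ) D :=
    monotoneOn_of_hasDerivWithinAt_nonneg hD (hcont fun x hx => (hG x hx).sub (hφ x hx))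
      (fun x hx => ((hG x (interior_subset hx)).sub (hφ x (interior_subset hx))).hasDerivWithinAt)
      (fun x hx => by linarith [le_abs_self (φ' x), hle x (interior_subset hx)])
  have hadd : MonotoneOn (G + φ) D :=
    monotoneOn_of_hasDerivWithinAt_nonneg hD (hcont fun x hx => (hG x hx).add (hφ x hx))
      (fun x hx => ((hG x (interior_subset hx)).add (hφ x (interior_subset hx))).hasDerivWithinAt)
      (fun x hx => by linarith [neg_abs_le (φ' x), hle x (interior_subset hx)])
  have key : ∀ {u v}, u ∈ D → v ∈ D → u ≤ v → |φ u - φ v| ≤ |G u - G v| := by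
    intro u v hu hv huv
    have h₁ := hsub hu hv huv
    have h₂ := hadd hu hv huv
    simp only [Pi.sub_apply, Pi.add_apply] at h₁ h₂
    calc |φ u - φ v| ≤ G v - G u := abs_le.2 ⟨by linarith, by linarith⟩
      _ ≤ |G u - G v| := by rw [abs_sub_comm]; exact le_abs_self _
  rcases le_total x y with hxy | hyx
  · exact key hx hy hxy
  · rw [abs_sub_comm, abs_sub_comm (G x)]
    exact key hy hx hyx

lemma integral_abs_sub_midpoint_of_monotoneOn {G : ℝ → ℝ} {a b : ℝ} (hab : a ≤ b)
    (hG : MonotoneOn G (Icc a b)) :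
    ∫ t in a..b, |G t - G ((a + b) / 2)|
      = (∫ t in (a + b) / 2..b, G t) - ∫ t in a..(a + b) / 2, G t := by
  set m := (a + b) / 2
  have ham : a ≤ m := by simp only [m]; linarith
  have hmb : m ≤ b := by simp only [m]; linarith
  have hGl : MonotoneOn G (Icc a m) := hG.mono (Icc_subset_Icc le_rfl hmb)
  have hGr : MonotoneOn G (Icc m b) := hG.mono (Icc_subset_Icc ham le_rfl)
  have hintl : IntervalIntegrable G volume a m := (uIcc_of_le ham ▸ hGl).intervalIntegrable
  have hintr : IntervalIntegrable G volume m b := (uIcc_of_le hmb ▸ hGr).intervalIntegrable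
  have hleft : ∫ t in a..m, |G t - G m| = ∫ t in a..m, (G m - G t) := by
    refine integral_congr fun t ht => ?_
    rw [uIcc_of_le ham] at ht
    rw [abs_sub_comm, abs_of_nonneg (sub_nonneg.2 (hGl ht ⟨ham, le_rfl⟩ ht.2))]
  have hright : ∫ t in m..b, |G t - G m| = ∫ t in m..b, (G t - G m) := by
    refine integral_congr fun t ht => ?_
    rw [uIcc_of_le hmb] at ht
    rw [abs_of_nonneg (sub_nonneg.2 (hGr ⟨le_rfl, hmb⟩ ht ht.1))]
  rw [← integral_add_adjacent_intervals (b := m) ((hintl.sub intervalIntegrable_const).abs)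
    ((hintr.sub intervalIntegrable_const).abs), hleft, hright,
    integral_sub intervalIntegrable_const hintl, integral_sub hintr intervalIntegrable_const,
    intervalIntegral.integral_const, intervalIntegral.integral_const, smul_eq_mul,
    smul_eq_mul]
  rw [show m - a = b - m by ring]
  ring

lemma integral_exp_add_mul {L : ℝ} (hL : L ≠ 0) (c u v : ℝ) :
    ∫ t in u..v, exp (c + L * t) = (exp (c + L * v) - exp (c + L * u)) / L := by
  rw [integral_comp_add_mul (fun x => exp x) hL, integral_exp, smul_eq_mul, inv_mul_eq_div]

lemma hasDerivAt_exp_add_mul_div {L : ℝ} (hL : L ≠ 0) (c t : ℝ) :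
    HasDerivAt (fun t => exp (c + L * t) / L) (exp (c + L * t)) t := by
  simpa [mul_div_cancel_right₀, hL] using
    (((hasDerivAt_id t).const_mul L).const_add c).exp.div_const L

lemma integral_abs_sub_midpoint_exp_div {c d : ℝ} (hcd : c ≠ d) :
    ∫ t in (0 : ℝ)..1, |exp (c + (d - c) * t) / (d - c) - exp (c + (d - c) * (1 / 2)) / (d - c)|
      = ((exp (d / 2) - exp (c / 2)) / (d - c)) ^ 2 := by
  have hL : d - c ≠ 0 := sub_ne_zero.2 hcd.symm
  have hmono : Monotone fun t => exp (c + (d - c) * t) / (d - c) :=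
    monotone_of_hasDerivAt_nonneg (hasDerivAt_exp_add_mul_div hL c) fun t => (exp_pos _).le
  have hmid : ((0 : ℝ) + 1) / 2 = 1 / 2 := by norm_num
  have h := integral_abs_sub_midpoint_of_monotoneOn zero_le_one (hmono.monotoneOn _)
  rw [hmid] at h
  rw [h, intervalIntegral.integral_div, intervalIntegral.integral_div, integral_exp_add_mul hL,
    integral_exp_add_mul hL]
  have e₀ : exp (c + (d - c) * 0) = exp (c / 2) ^ 2 := by rw [sq, ← exp_add]; ring_nf
  have e₁ : exp (c + (d - c) * 1) = exp (d / 2) ^ 2 := by rw [sq, ← exp_add]; ring_nf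
  have eh : exp (c + (d - c) * (1 / 2)) = exp (c / 2) * exp (d / 2) := by
    rw [← exp_add]; ring_nf
  rw [e₀, e₁, eh]
  field_simp

lemma inv_mul_integral_sub_eq_integral_comp {f : ℝ → ℝ} {a h : ℝ} (hh : h ≠ 0) (C : ℝ)
    (hf : IntervalIntegrable (fun t => f (a + t * h)) volume 0 1) :
    (1 / h) * (∫ x in a..(a + h), f x) - C = ∫ t in (0 : ℝ)..1, (f (a + t * h) - C) := by
  have hcv : ∫ t in (0 : ℝ)..1, f (a + t * h) = h⁻¹ * ∫ x in a..(a + h), f x := by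
    simp_rw [mul_comm _ h]
    rw [integral_comp_add_mul f hh a, smul_eq_mul, mul_zero, add_zero, mul_one]
  rw [integral_sub hf intervalIntegrable_const, hcv, intervalIntegral.integral_const]
  simp

lemma abs_integral_sub_le_of_abs_hasDerivAt_le {φ G φ' G' : ℝ → ℝ} {u v m : ℝ} (huv : u ≤ v)
    (hm : m ∈ Icc u v) (hφ : ∀ x ∈ Icc u v, HasDerivAt φ (φ' x) x)
    (hG : ∀ x ∈ Icc u v, HasDerivAt G (G' x) x) (hle : ∀ x ∈ Icc u v, |φ' x| ≤ G' x) :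
    |∫ t in u..v, (φ t - φ m)| ≤ ∫ t in u..v, |G t - G m| := by
  have hGc : ContinuousOn (fun t => |G t - G m|) (uIcc u v) := by
    rw [uIcc_of_le huv]
    exact ((ContinuousOn.sub (fun x hx => (hG x hx).continuousAt.continuousWithinAt)
      continuousOn_const).abs)
  rw [← Real.norm_eq_abs]
  exact norm_integral_le_of_norm_le huv
    (ae_of_all _ fun t ht => abs_sub_le_abs_sub_of_abs_hasDerivAt_le (convex_Icc u v) hφ hG hle
      (Ioc_subset_Icc_self ht) hm)
    hGc.intervalIntegrable

lemma rpow_one_sub_mul_rpow {A B : ℝ} (hA : 0 < A) (hB : 0 < B) (t : ℝ) :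
    A ^ (1 - t) * B ^ t = exp (log A + (log B - log A) * t) := by
  rw [rpow_def_of_pos hA, rpow_def_of_pos hB, ← exp_add]
  ring_nf

theorem hh_left_log_preinvex_general
    (K : Set ℝ) (η : ℝ → ℝ → ℝ)
    (f f' : ℝ → ℝ) (a b : ℝ)
    (hinvex : ∀ t ∈ Set.Icc (0 : ℝ) 1, a + t * η b a ∈ K)
    (hf : ∀ x ∈ K, HasDerivAt f (f' x) x)
    (hη : 0 < η b a)
    (ha : 0 < |f' a|) (hb : 0 < |f' b|) (hne : |f' a| ≠ |f' b|)
    (hlog : ∀ t ∈ Set.Icc (0 : ℝ) 1,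
      |f' (a + t * η b a)| ≤ |f' a| ^ (1 - t) * |f' b| ^ t) :
    |(1 / η b a) * (∫ x in a..(a + η b a), f x) - f ((2 * a + η b a) / 2)|
      ≤ η b a *
        ((|f' b| ^ ((1 : ℝ) / 2) - |f' a| ^ ((1 : ℝ) / 2)) /
          (Real.log |f' b| - Real.log |f' a|)) ^ 2 := by
  set h := η b a
  set c := log |f' a|
  set d := log |f' b|
  have hcd : c ≠ d := fun e => hne (by rw [← exp_log ha, ← exp_log hb]; exact congrArg exp e)
  set G : ℝ → ℝ := fun t => h * (exp (c + (d - c) * t) / (d - c))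
  have hφ : ∀ t ∈ Icc (0 : ℝ) 1, HasDerivAt (fun t => f (a + t * h)) (f' (a + t * h) * h) t :=
    fun t ht => (hf _ (hinvex t ht)).comp t ((hasDerivAt_mul_const h).const_add a)
  have hG (t : ℝ) : HasDerivAt G (h * exp (c + (d - c) * t)) t :=
    (hasDerivAt_exp_add_mul_div (sub_ne_zero.2 hcd.symm) c t).const_mul h
  have hbound : ∀ t ∈ Icc (0 : ℝ) 1, |f' (a + t * h) * h| ≤ h * exp (c + (d - c) * t) := by
    intro t ht
    rw [abs_mul, abs_of_pos hη, mul_comm]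
    exact mul_le_mul_of_nonneg_left ((hlog t ht).trans_eq (rpow_one_sub_mul_rpow ha hb t)) hη.le
  have hint : IntervalIntegrable (fun t => f (a + t * h)) volume 0 1 :=
    ContinuousOn.intervalIntegrable fun t ht =>
      (hφ t (by rwa [uIcc_of_le zero_le_one] at ht)).continuousAt.continuousWithinAt
  rw [inv_mul_integral_sub_eq_integral_comp hη.ne' _ hint,
    show (2 * a + h) / 2 = a + 1 / 2 * h by ring]
  calc _ ≤ ∫ t in (0 : ℝ)..1, |G t - G (1 / 2)| :=
        abs_integral_sub_le_of_abs_hasDerivAt_le zero_le_one ⟨by norm_num, by norm_num⟩ hφ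
          (fun t _ => hG t) hbound
    _ = h * ((exp (d / 2) - exp (c / 2)) / (d - c)) ^ 2 := by
        simp only [G, ← mul_sub, abs_mul, abs_of_pos hη]
        rw [intervalIntegral.integral_const_mul, integral_abs_sub_midpoint_exp_div hcd]
    _ = _ := by
        rw [rpow_def_of_pos ha, rpow_def_of_pos hb]
        congr 5 <;> ring

theorem hh_left_log_preinvex
    (K : Set ℝ) (hK : IsOpen K) (η : ℝ → ℝ → ℝ)
    (f f' : ℝ → ℝ) (a b : ℝ)
    (hinvex : ∀ t ∈ Set.Icc (0 : ℝ) 1, a + t * η b a ∈ K)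
    (hf : ∀ x ∈ K, HasDerivAt f (f' x) x)
    (hη : 0 < η b a)
    (ha : 0 < |f' a|) (hb : 0 < |f' b|) (hne : |f' a| ≠ |f' b|)
    (hlog : ∀ t ∈ Set.Icc (0 : ℝ) 1,
      |f' (a + t * η b a)| ≤ |f' a| ^ (1 - t) * |f' b| ^ t) :
    |(1 / η b a) * (∫ x in a..(a + η b a), f x) - f ((2 * a + η b a) / 2)|
      ≤ η b a *
        ((|f' b| ^ ((1 : ℝ) / 2) - |f' a| ^ ((1 : ℝ) / 2)) /
          (Real.log |f' b| - Real.log |f' a|)) ^ 2 :=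
  hh_left_log_preinvex_general K η f f' a b hinvex hf hη ha hb hne hlog
end

section
/- Let f be differentiable on an open interval containing [a,b], a < b, with |f'| log-convex on [a,b] and |f'(a)|, |f'(b)| > 0, |f'(a)| ≠ |f'(b)|. Then |(1/(b-a)) ∫_a^b f(x) dx − f((a+b)/2)| ≤ (b-a)·[ (|f'(b)|^{1/2} − |f'(a)|^{1/2})/(log|f'(b)| − log|f'(a)|) ]². -/
open MeasureTheory intervalIntegral

open Set Real

/-!
Integrating by parts against the Peano kernel of the midpoint rule (`x - a` on `[a, m]`,
`x - b` on `[m, b]`) writes `∫ f - (b - a) f(m)` as an integral of `f'`. Log-convexity bounds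
`|f'|` by the geometric interpolant `g` of `|f'(a)|` and `|f'(b)|`, an exponential with
`g' = c g` for `c = (log |f'(b)| - log |f'(a)|) / (b - a)`. Against such a `g` the kernel
integrates in closed form to `(g a - 2 g m + g b) / c² = (√|f'(b)| - √|f'(a)|)² / c²`.
-/

section KernelEstimate

variable {f f' g : ℝ → ℝ} {a b m : ℝ}

theorem intervalIntegrable_of_hasDerivAt_of_abs_le
    (hf : ∀ x ∈ uIcc a b, HasDerivAt f (f' x) x) (hg : IntervalIntegrable g volume a b)
    (hle : ∀ x ∈ uIcc a b, |f' x| ≤ g x) : IntervalIntegrable f' volume a b := by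
  have hae : ∀ᵐ x ∂volume.restrict (uIoc a b), x ∈ uIcc a b := by
    filter_upwards [ae_restrict_mem measurableSet_uIoc] with x hx
    exact uIoc_subset_uIcc hx
  refine hg.mono_fun' ((measurable_deriv f).aestronglyMeasurable.congr ?_) ?_
  · filter_upwards [hae] with x hx
    exact (hf x hx).deriv
  · filter_upwards [hae] with x hx
    exact hle x hx

theorem integral_sub_mul_eq_of_hasDerivAt (ham : a ≤ m) (hmb : m ≤ b)
    (hf : ∀ x ∈ Icc a b, HasDerivAt f (f' x) x) (hf' : IntervalIntegrable f' volume a b) :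
    (∫ x in a..b, f x) - (b - a) * f m
      = -((∫ x in a..m, (x - a) * f' x) + ∫ x in m..b, (x - b) * f' x) := by
  have hsub_left : uIcc a m ⊆ Icc a b := uIcc_subset_Icc ⟨le_rfl, ham.trans hmb⟩ ⟨ham, hmb⟩
  have hsub_right : uIcc m b ⊆ Icc a b := uIcc_subset_Icc ⟨ham, hmb⟩ ⟨ham.trans hmb, le_rfl⟩
  have hfc : ContinuousOn f (Icc a b) := fun x hx => (hf x hx).continuousAt.continuousWithinAt
  have hleft := integral_mul_deriv_eq_deriv_mul (fun x _ => (hasDerivAt_id x).sub_const a)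
    (fun x hx => hf x (hsub_left hx)) intervalIntegrable_const
    (hf'.mono_set (by rwa [uIcc_of_le (ham.trans hmb)]))
  have hright := integral_mul_deriv_eq_deriv_mul (fun x _ => (hasDerivAt_id x).sub_const b)
    (fun x hx => hf x (hsub_right hx)) intervalIntegrable_const
    (hf'.mono_set (by rwa [uIcc_of_le (ham.trans hmb)]))
  rw [← integral_add_adjacent_intervals ((hfc.mono hsub_left).intervalIntegrable)
    ((hfc.mono hsub_right).intervalIntegrable)]
  simp only [id, sub_self, zero_mul, sub_zero, one_mul] at hleft hright
  linarith

theorem abs_integral_sub_mul_le_of_abs_deriv_le (ham : a ≤ m) (hmb : m ≤ b)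
    (hf : ∀ x ∈ Icc a b, HasDerivAt f (f' x) x) (hg : ContinuousOn g (Icc a b))
    (hle : ∀ x ∈ Icc a b, |f' x| ≤ g x) :
    |(∫ x in a..b, f x) - (b - a) * f m|
      ≤ (∫ x in a..m, (x - a) * g x) + ∫ x in m..b, (b - x) * g x := by
  have hab := ham.trans hmb
  have hsub_left : uIcc a m ⊆ Icc a b := uIcc_subset_Icc ⟨le_rfl, hab⟩ ⟨ham, hmb⟩
  have hsub_right : uIcc m b ⊆ Icc a b := uIcc_subset_Icc ⟨ham, hmb⟩ ⟨hab, le_rfl⟩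
  have hf' : IntervalIntegrable f' volume a b :=
    intervalIntegrable_of_hasDerivAt_of_abs_le (fun x hx => hf x (by rwa [uIcc_of_le hab] at hx))
      (hg.intervalIntegrable_of_Icc hab) (fun x hx => hle x (by rwa [uIcc_of_le hab] at hx))
  have hleft : |∫ x in a..m, (x - a) * f' x| ≤ ∫ x in a..m, (x - a) * g x := by
    refine (abs_integral_le_integral_abs ham).trans (integral_mono_on ham ?_ ?_ fun x hx => ?_)
    · exact ((hf'.mono_set (by rwa [uIcc_of_le hab])).continuousOn_mul
        (continuous_sub_right a).continuousOn).abs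
    · exact ((continuous_sub_right a).continuousOn.mul (hg.mono hsub_left)).intervalIntegrable
    · rw [abs_mul, abs_of_nonneg (sub_nonneg.2 hx.1)]
      exact mul_le_mul_of_nonneg_left (hle x (hsub_left (Icc_subset_uIcc hx))) (sub_nonneg.2 hx.1)
  have hright : |∫ x in m..b, (x - b) * f' x| ≤ ∫ x in m..b, (b - x) * g x := by
    refine (abs_integral_le_integral_abs hmb).trans (integral_mono_on hmb ?_ ?_ fun x hx => ?_)
    · exact ((hf'.mono_set (by rwa [uIcc_of_le hab])).continuousOn_mul
        (continuous_sub_right b).continuousOn).abs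
    · exact ((continuous_const.sub continuous_id).continuousOn.mul
        (hg.mono hsub_right)).intervalIntegrable
    · rw [abs_mul, abs_sub_comm, abs_of_nonneg (sub_nonneg.2 hx.2)]
      exact mul_le_mul_of_nonneg_left (hle x (hsub_right (Icc_subset_uIcc hx))) (sub_nonneg.2 hx.2)
  rw [integral_sub_mul_eq_of_hasDerivAt ham hmb hf hf', abs_neg]
  exact (abs_add_le _ _).trans (add_le_add hleft hright)

end KernelEstimate

theorem integral_tent_mul_eq_of_hasDerivAt {G : ℝ → ℝ} {c : ℝ} (a b : ℝ) (hc : c ≠ 0)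
    (hG : ∀ x, HasDerivAt G (c * G x) x) :
    (∫ x in a..(a + b) / 2, (x - a) * G x) + ∫ x in (a + b) / 2..b, (b - x) * G x
      = (G a - 2 * G ((a + b) / 2) + G b) / c ^ 2 := by
  have hGc : Continuous G := continuous_iff_continuousAt.2 fun x => (hG x).continuousAt
  have hleft : ∀ x, HasDerivAt (fun x => ((x - a) / c - 1 / c ^ 2) * G x) ((x - a) * G x) x := by
    intro x
    refine ((((hasDerivAt_id' x).sub_const a).div_const c).sub_const (1 / c ^ 2)).mul (hG x)
      |>.congr_deriv ?_
    field_simp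
    ring
  have hright : ∀ x, HasDerivAt (fun x => ((b - x) / c + 1 / c ^ 2) * G x) ((b - x) * G x) x := by
    intro x
    refine ((((hasDerivAt_id' x).const_sub b).div_const c).add_const (1 / c ^ 2)).mul (hG x)
      |>.congr_deriv ?_
    field_simp
    ring
  rw [integral_eq_sub_of_hasDerivAt (fun x _ => hleft x)
      (((continuous_sub_right a).mul hGc).intervalIntegrable _ _),
    integral_eq_sub_of_hasDerivAt (fun x _ => hright x)
      (((continuous_const.sub continuous_id).mul hGc).intervalIntegrable _ _)]
  field_simp
  ring

noncomputable def geomInterp (a b A B x : ℝ) : ℝ :=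
  exp (log A + (log B - log A) * ((x - a) / (b - a)))

section GeomInterp

variable {a b A B : ℝ}

theorem hasDerivAt_geomInterp (x : ℝ) :
    HasDerivAt (geomInterp a b A B) ((log B - log A) / (b - a) * geomInterp a b A B x) x := by
  refine ((((hasDerivAt_id' x).sub_const a).div_const (b - a)).const_mul (log B - log A)
    |>.const_add (log A)).exp.congr_deriv ?_
  rw [geomInterp]
  ring

theorem geomInterp_lineMap (hA : 0 < A) (hB : 0 < B) (hab : a ≠ b) (t : ℝ) :
    geomInterp a b A B ((1 - t) * a + t * b) = A ^ (1 - t) * B ^ t := by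
  have hba : b - a ≠ 0 := sub_ne_zero.2 hab.symm
  have ht : ((1 - t) * a + t * b - a) / (b - a) = t := by field_simp; ring
  rw [geomInterp, ht, rpow_def_of_pos hA, rpow_def_of_pos hB, ← exp_add]
  ring_nf

theorem geomInterp_left (hA : 0 < A) : geomInterp a b A B a = A := by
  simp [geomInterp, exp_log hA]

theorem geomInterp_right (hB : 0 < B) (hab : a ≠ b) : geomInterp a b A B b = B := by
  simp [geomInterp, div_self (sub_ne_zero.2 hab.symm), exp_log hB]

theorem geomInterp_midpoint (hA : 0 < A) (hB : 0 < B) (hab : a ≠ b) :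
    geomInterp a b A B ((a + b) / 2) = √A * √B := by
  have := geomInterp_lineMap hA hB hab (1 / 2)
  rw [show (1 - 1 / 2) * a + 1 / 2 * b = (a + b) / 2 by ring,
    show (1 - 1 / 2 : ℝ) = 1 / 2 by norm_num] at this
  rw [this, sqrt_eq_rpow, sqrt_eq_rpow]

end GeomInterp

theorem hh_left_log_convex_general
    (I : Set ℝ)
    (f f' : ℝ → ℝ) (a b : ℝ) (hab : a < b) (hsub : Set.Icc a b ⊆ I)
    (hf : ∀ x ∈ I, HasDerivAt f (f' x) x)
    (ha : 0 < |f' a|) (hb : 0 < |f' b|) (hne : |f' a| ≠ |f' b|)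
    (hlog : ∀ t ∈ Set.Icc (0 : ℝ) 1,
      |f' ((1 - t) * a + t * b)| ≤ |f' a| ^ (1 - t) * |f' b| ^ t) :
    |(1 / (b - a)) * (∫ x in a..b, f x) - f ((a + b) / 2)|
      ≤ (b - a) *
        ((|f' b| ^ ((1 : ℝ) / 2) - |f' a| ^ ((1 : ℝ) / 2)) /
          (Real.log |f' b| - Real.log |f' a|)) ^ 2 := by
  set A := |f' a|
  set B := |f' b|
  have hba : 0 < b - a := sub_pos.2 hab
  have hlogAB : log B - log A ≠ 0 :=
    sub_ne_zero.2 fun h => hne (log_injOn_pos ha hb h.symm)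
  have hle : ∀ x ∈ Icc a b, |f' x| ≤ geomInterp a b A B x := by
    intro x hx
    have ht : (x - a) / (b - a) ∈ Icc (0 : ℝ) 1 :=
      ⟨div_nonneg (sub_nonneg.2 hx.1) hba.le, (div_le_one hba).2 (by linarith [hx.2])⟩
    have hx' : (1 - (x - a) / (b - a)) * a + (x - a) / (b - a) * b = x := by field_simp; ring
    have hg := geomInterp_lineMap ha hb hab.ne ((x - a) / (b - a))
    rw [hx'] at hg
    simpa only [hg, hx'] using hlog _ ht
  have hest := abs_integral_sub_mul_le_of_abs_deriv_le (m := (a + b) / 2) (by linarith)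
    (by linarith) (fun x hx => hf x (hsub hx))
    (fun x _ => (hasDerivAt_geomInterp x).continuousAt.continuousWithinAt) hle
  rw [integral_tent_mul_eq_of_hasDerivAt a b (div_ne_zero hlogAB hba.ne')
    hasDerivAt_geomInterp, geomInterp_left ha, geomInterp_right hb hab.ne,
    geomInterp_midpoint ha hb hab.ne] at hest
  rw [← sqrt_eq_rpow, ← sqrt_eq_rpow]
  calc |(1 / (b - a)) * (∫ x in a..b, f x) - f ((a + b) / 2)|
      = |(∫ x in a..b, f x) - (b - a) * f ((a + b) / 2)| / (b - a) := by
        rw [eq_div_iff hba.ne', ← abs_of_pos hba, ← abs_mul, abs_of_pos hba]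
        congr 1
        field_simp
    _ ≤ (A - 2 * (√A * √B) + B) / ((log B - log A) / (b - a)) ^ 2 / (b - a) := by gcongr
    _ = (b - a) * ((√B - √A) / (log B - log A)) ^ 2 := by
        have hsq : A - 2 * (√A * √B) + B = (√B - √A) ^ 2 := by
          rw [sub_sq, sq_sqrt ha.le, sq_sqrt hb.le]
          ring
        rw [hsq]
        field_simp

theorem hh_left_log_convex
    (I : Set ℝ) (hIopen : IsOpen I) (hIconn : I.OrdConnected)
    (f f' : ℝ → ℝ) (a b : ℝ) (hab : a < b) (hsub : Set.Icc a b ⊆ I)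
    (hf : ∀ x ∈ I, HasDerivAt f (f' x) x)
    (ha : 0 < |f' a|) (hb : 0 < |f' b|) (hne : |f' a| ≠ |f' b|)
    (hlog : ∀ t ∈ Set.Icc (0 : ℝ) 1,
      |f' ((1 - t) * a + t * b)| ≤ |f' a| ^ (1 - t) * |f' b| ^ t) :
    |(1 / (b - a)) * (∫ x in a..b, f x) - f ((a + b) / 2)|
      ≤ (b - a) *
        ((|f' b| ^ ((1 : ℝ) / 2) - |f' a| ^ ((1 : ℝ) / 2)) /
          (Real.log |f' b| - Real.log |f' a|)) ^ 2 :=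
  hh_left_log_convex_general I f f' a b hab hsub hf ha hb hne hlog
end

section
/- Let K ⊆ ℝⁿ be invex with respect to η satisfying Condition C. For fixed x, y ∈ K, the function f is log-preinvex with respect to η on the η-path P_{xv} = {x + t·η(y,x) : t ∈ [0,1]} (where v = x + η(y,x)) if and only if the function φ(t) := f(x + t·η(y,x)) is log-convex on [0,1]. -/
theorem log_preinvex_on_path_iff_log_convex
    (n : ℕ) (K : Set (Fin n → ℝ)) (η : (Fin n → ℝ) → (Fin n → ℝ) → (Fin n → ℝ))
    (hinvex : ∀ u ∈ K, ∀ v ∈ K, ∀ t ∈ Set.Icc (0 : ℝ) 1, u + t • η v u ∈ K)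
    (hC1 : ∀ x ∈ K, ∀ y ∈ K, ∀ t ∈ Set.Icc (0 : ℝ) 1,
      η y (y + t • η x y) = (-t) • η x y)
    (hC2 : ∀ x ∈ K, ∀ y ∈ K, ∀ t ∈ Set.Icc (0 : ℝ) 1,
      η x (y + t • η x y) = (1 - t) • η x y)
    (f : (Fin n → ℝ) → ℝ) (hpos : ∀ u ∈ K, 0 < f u)
    (x y : Fin n → ℝ) (hx : x ∈ K) (hy : y ∈ K) :
    (∀ t₁ ∈ Set.Icc (0 : ℝ) 1, ∀ t₂ ∈ Set.Icc (0 : ℝ) 1, ∀ l ∈ Set.Icc (0 : ℝ) 1,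
        f ((x + t₁ • η y x) + l • η (x + t₂ • η y x) (x + t₁ • η y x))
          ≤ f (x + t₁ • η y x) ^ (1 - l) * f (x + t₂ • η y x) ^ l)
      ↔ (∀ t₁ ∈ Set.Icc (0 : ℝ) 1, ∀ t₂ ∈ Set.Icc (0 : ℝ) 1, ∀ l ∈ Set.Icc (0 : ℝ) 1,
        f (x + ((1 - l) * t₁ + l * t₂) • η y x)
          ≤ f (x + t₁ • η y x) ^ (1 - l) * f (x + t₂ • η y x) ^ l) := by
  set w := η y x with hw
  -- key identity from Condition C
  have key : ∀ t₁ ∈ Set.Icc (0 : ℝ) 1, ∀ t₂ ∈ Set.Icc (0 : ℝ) 1,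
      η (x + t₂ • w) (x + t₁ • w) = (t₂ - t₁) • w := by
    intro t₁ ht₁ t₂ ht₂
    obtain ⟨h10, h11⟩ := ht₁
    obtain ⟨h20, h21⟩ := ht₂
    have hu : x + t₂ • w ∈ K := hinvex x hx y hy t₂ ⟨h20, h21⟩
    rcases lt_trichotomy t₁ t₂ with hlt | heq | hgt
    · -- t₁ < t₂, so t₂ > 0; use η x (x+t₂w) = -t₂ w
      have ht2pos : 0 < t₂ := lt_of_le_of_lt h10 hlt
      set s := (t₂ - t₁) / t₂ with hs
      have hs0 : 0 ≤ s := div_nonneg (by linarith) ht2pos.le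
      have hs1 : s ≤ 1 := by
        rw [div_le_one ht2pos]; linarith
      have hst : s * t₂ = t₂ - t₁ := div_mul_cancel₀ _ ht2pos.ne'
      have hηxu : η x (x + t₂ • w) = (-t₂) • w := hC1 y hy x hx t₂ ⟨h20, h21⟩
      have h := hC1 x hx (x + t₂ • w) hu s ⟨hs0, hs1⟩
      rw [hηxu] at h
      have harg : (x + t₂ • w) + s • ((-t₂) • w) = x + t₁ • w := by
        rw [smul_smul, show s * (-t₂) = t₁ - t₂ by rw [mul_neg, hst]; ring]
        module
      rw [harg] at h
      rw [h, smul_smul, show (-s) * (-t₂) = t₂ - t₁ by rw [neg_mul_neg, hst]]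
    · -- t₁ = t₂ : η z z = 0
      subst heq
      have h := hC1 x hx (x + t₁ • w) hu 0 ⟨le_refl _, zero_le_one⟩
      rw [zero_smul, add_zero, neg_zero, zero_smul] at h
      rw [h, sub_self, zero_smul]
    · -- t₂ < t₁, so t₂ < 1; use η y (x+t₂w) = (1-t₂) w
      have ht2lt : t₂ < 1 := lt_of_lt_of_le hgt h11
      set s := (t₁ - t₂) / (1 - t₂) with hs
      have hd : 0 < 1 - t₂ := by linarith
      have hs0 : 0 ≤ s := div_nonneg (by linarith) hd.le
      have hs1 : s ≤ 1 := by
        rw [div_le_one hd]; linarith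
      have hst : s * (1 - t₂) = t₁ - t₂ := div_mul_cancel₀ _ hd.ne'
      have hηyu : η y (x + t₂ • w) = (1 - t₂) • w := hC2 y hy x hx t₂ ⟨h20, h21⟩
      have h := hC1 y hy (x + t₂ • w) hu s ⟨hs0, hs1⟩
      rw [hηyu] at h
      have harg : (x + t₂ • w) + s • ((1 - t₂) • w) = x + t₁ • w := by
        rw [smul_smul, hst]
        module
      rw [harg] at h
      rw [h, smul_smul, show (-s) * (1 - t₂) = t₂ - t₁ by rw [neg_mul, hst]; ring]
  have harg2 : ∀ t₁ t₂ l : ℝ,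
      (x + t₁ • w) + l • ((t₂ - t₁) • w) = x + ((1 - l) * t₁ + l * t₂) • w := by
    intro t₁ t₂ l
    module
  constructor
  · intro h t₁ ht₁ t₂ ht₂ l hl
    have := h t₁ ht₁ t₂ ht₂ l hl
    rwa [key t₁ ht₁ t₂ ht₂, harg2] at this
  · intro h t₁ ht₁ t₂ ht₂ l hl
    have := h t₁ ht₁ t₂ ht₂ l hl
    rwa [key t₁ ht₁ t₂ ht₂, harg2]
end

section
/- Let K ⊆ ℝⁿ be invex with respect to η satisfying Condition C, f : K → (0,∞) log-preinvex with respect to η on the η-path P_{xv} for fixed x, y ∈ K, with φ(t) = f(x + t·η(y,x)) continuous and φ(a) ≠ φ(b). Then for every a, b ∈ (0,1) with a < b: |(1/(b-a)) ∫_a^b (∫_0^s f(x + t·η(y,x)) dt) ds − ∫_0^{(a+b)/2} f(x + s·η(y,x)) ds| ≤ (b-a)·[ (f(x + b·η(y,x))^{1/2} − f(x + a·η(y,x))^{1/2}) / (log f(x + b·η(y,x)) − log f(x + a·η(y,x))) ]². -/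
/-!
With `φ t = f (x + t • η y x)`, log-convexity puts `φ` below the exponential `g t = exp (k t + c)`
agreeing with `φ` at `a` and `b`. Hence, for `m = (a + b) / 2` and `s ∈ [a, b]`, the primitive
`Φ s = ∫₀ˢ φ` satisfies `|Φ s - Φ m| ≤ |∫ₘˢ g|`, so the left-hand side is at most
`(b - a)⁻¹ ∫ₐᵇ |∫ₘˢ g|`. For an exponential this is explicit: `((√(g b) - √(g a)) / k) ^ 2`,
because `g m = √(g a * g b)`.
-/

open MeasureTheory intervalIntegral Set Real

theorem le_exp_of_le_rpow_mul_rpow {φ : ℝ → ℝ} {a b k c : ℝ} (hab : a < b)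
    (ha : exp (k * a + c) = φ a) (hb : exp (k * b + c) = φ b)
    (hφ : ∀ l ∈ Icc (0 : ℝ) 1, φ ((1 - l) * a + l * b) ≤ φ a ^ (1 - l) * φ b ^ l) :
    ∀ t ∈ Icc a b, φ t ≤ exp (k * t + c) := by
  rintro t ⟨hat, htb⟩
  have hba : 0 < b - a := sub_pos.2 hab
  set l := (t - a) / (b - a) with hl
  have ht : (1 - l) * a + l * b = t := by rw [hl]; field_simp; ring
  calc φ t = φ ((1 - l) * a + l * b) := by rw [ht]
    _ ≤ φ a ^ (1 - l) * φ b ^ l :=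
      hφ l ⟨div_nonneg (by linarith) hba.le, (div_le_one hba).2 (by linarith)⟩
    _ = exp (k * t + c) := by
      rw [← ha, ← hb, ← exp_mul, ← exp_mul, ← exp_add, ← ht]; ring_nf

theorem abs_intervalIntegral_le_of_nonneg_of_le {f g : ℝ → ℝ} {a b : ℝ}
    (hf : IntervalIntegrable f volume a b) (hg : IntervalIntegrable g volume a b)
    (h0 : ∀ t ∈ uIcc a b, 0 ≤ f t) (hfg : ∀ t ∈ uIcc a b, f t ≤ g t) :
    |∫ t in a..b, f t| ≤ |∫ t in a..b, g t| := by
  rw [abs_integral_eq_abs_integral_uIoc, abs_integral_eq_abs_integral_uIoc]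
  exact abs_le_abs_of_nonneg
    (setIntegral_nonneg measurableSet_uIoc fun t ht => h0 t (uIoc_subset_uIcc ht))
    (setIntegral_mono_on hf.def' hg.def' measurableSet_uIoc fun t ht =>
      hfg t (uIoc_subset_uIcc ht))

theorem abs_average_primitive_sub_primitive_le {φ g : ℝ → ℝ} {c a b m : ℝ}
    (hca : c ≤ a) (hab : a < b) (ham : a ≤ m) (hmb : m ≤ b)
    (hφ : IntervalIntegrable φ volume c b) (hg : Continuous g)
    (h0 : ∀ t ∈ Icc a b, 0 ≤ φ t) (hφg : ∀ t ∈ Icc a b, φ t ≤ g t) :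
    |1 / (b - a) * (∫ s in a..b, ∫ t in c..s, φ t) - ∫ t in c..m, φ t|
      ≤ 1 / (b - a) * ∫ s in a..b, |∫ t in m..s, g t| := by
  have hcb : c ≤ b := hca.trans hab.le
  have hsub : ∀ u ∈ Icc c b, ∀ v ∈ Icc c b, IntervalIntegrable φ volume u v :=
    fun u hu v hv => hφ.mono_set (uIcc_subset_uIcc (by rwa [uIcc_of_le hcb])
      (by rwa [uIcc_of_le hcb]))
  have hmcb : m ∈ Icc c b := ⟨hca.trans ham, hmb⟩
  have hΨ : IntervalIntegrable (fun s => ∫ t in m..s, φ t) volume a b :=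
    ((continuousOn_primitive_interval' hφ (by rwa [uIcc_of_le hcb])).mono
      (uIcc_subset_uIcc (by rw [uIcc_of_le hcb]; exact ⟨hca, hab.le⟩)
        (by rw [uIcc_of_le hcb]; exact ⟨hcb, le_rfl⟩))).intervalIntegrable
  have hsplit : ∫ s in a..b, ∫ t in c..s, φ t
      = (b - a) * (∫ t in c..m, φ t) + ∫ s in a..b, ∫ t in m..s, φ t := by
    rw [← smul_eq_mul, ← intervalIntegral.integral_const,
      ← integral_add intervalIntegrable_const hΨ]
    refine integral_congr fun s hs => ?_
    rw [uIcc_of_le hab.le] at hs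
    exact (integral_add_adjacent_intervals (hsub c ⟨le_rfl, hcb⟩ m hmcb)
      (hsub m hmcb s ⟨hca.trans hs.1, hs.2⟩)).symm
  have hbound : |∫ s in a..b, ∫ t in m..s, φ t| ≤ ∫ s in a..b, |∫ t in m..s, g t| := by
    refine (abs_integral_le_integral_abs hab.le).trans (integral_mono_on hab.le hΨ.abs
      ((continuous_primitive (fun u v => hg.intervalIntegrable u v) m).abs.intervalIntegrable a b)
      fun s hs => ?_)
    have hms : uIcc m s ⊆ Icc a b := uIcc_subset_Icc ⟨ham, hmb⟩ hs
    exact abs_intervalIntegral_le_of_nonneg_of_le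
      (hsub m hmcb s ⟨hca.trans hs.1, hs.2⟩) (hg.intervalIntegrable m s)
      (fun t ht => h0 t (hms ht)) (fun t ht => hφg t (hms ht))
  have hba : 0 < b - a := sub_pos.2 hab
  have hcancel : 1 / (b - a) * ((b - a) * (∫ t in c..m, φ t) + ∫ s in a..b, ∫ t in m..s, φ t)
      - ∫ t in c..m, φ t = 1 / (b - a) * ∫ s in a..b, ∫ t in m..s, φ t := by
    field_simp; ring
  rw [hsplit, hcancel, abs_mul, abs_of_pos (one_div_pos.2 hba)]
  gcongr

theorem integral_abs_sub_eq_of_hasDerivAt_of_monotone {F f : ℝ → ℝ} {a b m : ℝ}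
    (hF : ∀ t, HasDerivAt F (f t) t) (hf : Monotone f) (ham : a ≤ m) (hmb : m ≤ b) :
    ∫ s in a..b, |f s - f m| = F a + F b - 2 * F m - (a + b - 2 * m) * f m := by
  have hint : ∀ u v, IntervalIntegrable (fun s => |f s - f m|) volume u v :=
    fun u v => (hf.intervalIntegrable.sub intervalIntegrable_const).abs
  have hFTC : ∀ u v, ∫ s in u..v, f s = F v - F u :=
    fun u v => integral_eq_sub_of_hasDerivAt (fun t _ => hF t) hf.intervalIntegrable
  have left : ∫ s in a..m, |f s - f m| = ∫ s in a..m, (f m - f s) :=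
    integral_congr fun s hs => by
      rw [uIcc_of_le ham] at hs
      simp only [abs_sub_comm (f s), abs_of_nonneg (sub_nonneg.2 (hf hs.2))]
  have right : ∫ s in m..b, |f s - f m| = ∫ s in m..b, (f s - f m) :=
    integral_congr fun s hs => by
      rw [uIcc_of_le hmb] at hs
      simp only [abs_of_nonneg (sub_nonneg.2 (hf hs.1))]
  rw [← integral_add_adjacent_intervals (hint a m) (hint m b), left, right,
    integral_sub intervalIntegrable_const hf.intervalIntegrable,
    integral_sub hf.intervalIntegrable intervalIntegrable_const,
    intervalIntegral.integral_const, intervalIntegral.integral_const, hFTC, hFTC,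
    smul_eq_mul, smul_eq_mul]
  ring

theorem integral_abs_integral_exp_mul_add_midpoint {k c a b : ℝ} (hk : k ≠ 0) (hab : a ≤ b) :
    ∫ s in a..b, |∫ t in (a + b) / 2..s, exp (k * t + c)|
      = ((exp ((k * b + c) / 2) - exp ((k * a + c) / 2)) / k) ^ 2 := by
  have hexp : ∀ t, HasDerivAt (fun t => exp (k * t + c)) (k * exp (k * t + c)) t := fun t => by
    simpa [mul_comm] using (((hasDerivAt_id t).const_mul k).add_const c).exp
  have hF' : ∀ t, HasDerivAt (fun t => exp (k * t + c) / k) (exp (k * t + c)) t := fun t => by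
    simpa [hk] using (hexp t).div_const k
  have hF : ∀ t, HasDerivAt (fun t => exp (k * t + c) / k ^ 2) (exp (k * t + c) / k) t :=
    fun t => ((hexp t).div_const (k ^ 2)).congr_deriv (by field_simp)
  have hcont : Continuous fun t => exp (k * t + c) := by fun_prop
  have hinner : ∀ s, ∫ t in (a + b) / 2..s, exp (k * t + c)
      = exp (k * s + c) / k - exp (k * ((a + b) / 2) + c) / k := fun s =>
    integral_eq_sub_of_hasDerivAt (fun t _ => hF' t) (hcont.intervalIntegrable _ _)
  simp_rw [hinner]
  rw [integral_abs_sub_eq_of_hasDerivAt_of_monotone hF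
    (monotone_of_hasDerivAt_nonneg hF' fun t => (exp_pos _).le) (by linarith) (by linarith)]
  have hsq : ∀ u, exp u = exp (u / 2) ^ 2 := fun u => by rw [← exp_nat_mul]; ring_nf
  have hmid : exp (k * ((a + b) / 2) + c) = exp ((k * a + c) / 2) * exp ((k * b + c) / 2) := by
    rw [← exp_add]; ring_nf
  rw [hmid, hsq (k * a + c), hsq (k * b + c)]
  field_simp
  ring

theorem hh_several_variables_log_preinvex_general
    (n : ℕ) (K : Set (Fin n → ℝ)) (η : (Fin n → ℝ) → (Fin n → ℝ) → (Fin n → ℝ))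
    (hinvex : ∀ u ∈ K, ∀ v ∈ K, ∀ t ∈ Set.Icc (0 : ℝ) 1, u + t • η v u ∈ K)
    (f : (Fin n → ℝ) → ℝ) (hpos : ∀ u ∈ K, 0 < f u)
    (x y : Fin n → ℝ) (hx : x ∈ K) (hy : y ∈ K)
    (hlog : ∀ t₁ ∈ Set.Icc (0 : ℝ) 1, ∀ t₂ ∈ Set.Icc (0 : ℝ) 1,
      ∀ l ∈ Set.Icc (0 : ℝ) 1,
        f (x + ((1 - l) * t₁ + l * t₂) • η y x)
          ≤ f (x + t₁ • η y x) ^ (1 - l) * f (x + t₂ • η y x) ^ l)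
    (hcont : ContinuousOn (fun t : ℝ => f (x + t • η y x)) (Set.Icc 0 1))
    (a b : ℝ) (ha : a ∈ Set.Ioo (0 : ℝ) 1) (hb : b ∈ Set.Ioo (0 : ℝ) 1)
    (hab : a < b) (hne : f (x + a • η y x) ≠ f (x + b • η y x)) :
    |(1 / (b - a)) * (∫ s in a..b, ∫ t in (0 : ℝ)..s, f (x + t • η y x)) -
        ∫ s in (0 : ℝ)..((a + b) / 2), f (x + s • η y x)|
      ≤ (b - a) *
        ((f (x + b • η y x) ^ ((1 : ℝ) / 2) - f (x + a • η y x) ^ ((1 : ℝ) / 2)) /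
          (Real.log (f (x + b • η y x)) - Real.log (f (x + a • η y x)))) ^ 2 := by
  have hφpos : ∀ t ∈ Icc (0 : ℝ) 1, 0 < f (x + t • η y x) :=
    fun t ht => hpos _ (hinvex x hx y hy t ht)
  have haI : a ∈ Icc (0 : ℝ) 1 := Ioo_subset_Icc_self ha
  have hbI : b ∈ Icc (0 : ℝ) 1 := Ioo_subset_Icc_self hb
  set A := f (x + a • η y x)
  set B := f (x + b • η y x)
  have hA : 0 < A := hφpos a haI
  have hB : 0 < B := hφpos b hbI
  have hba : b - a ≠ 0 := sub_ne_zero.2 hab.ne'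
  have hD : log B - log A ≠ 0 := sub_ne_zero.2 fun h => hne (log_injOn_pos hA hB h.symm)
  set k := (log B - log A) / (b - a) with hk
  have hka : k * a + (log A - k * a) = log A := by ring
  have hkb : k * b + (log A - k * a) = log B := by rw [hk]; field_simp; ring
  calc _ ≤ 1 / (b - a) * ∫ s in a..b, |∫ t in (a + b) / 2..s, exp (k * t + (log A - k * a))| :=
        abs_average_primitive_sub_primitive_le ha.1.le hab (by linarith) (by linarith)
          ((hcont.mono (Icc_subset_Icc le_rfl hbI.2)).intervalIntegrable_of_Icc hbI.1)
          (by fun_prop) (fun t ht => (hφpos t ⟨ha.1.le.trans ht.1, ht.2.trans hbI.2⟩).le)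
          (le_exp_of_le_rpow_mul_rpow hab (by rw [hka, exp_log hA]) (by rw [hkb, exp_log hB])
            fun l hl => hlog a haI b hbI l hl)
    _ = _ := by
      rw [integral_abs_integral_exp_mul_add_midpoint (div_ne_zero hD hba) hab.le, hka, hkb,
        rpow_def_of_pos hA, rpow_def_of_pos hB, mul_one_div, mul_one_div]
      field_simp

theorem hh_several_variables_log_preinvex
    (n : ℕ) (K : Set (Fin n → ℝ)) (η : (Fin n → ℝ) → (Fin n → ℝ) → (Fin n → ℝ))
    (hinvex : ∀ u ∈ K, ∀ v ∈ K, ∀ t ∈ Set.Icc (0 : ℝ) 1, u + t • η v u ∈ K)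
    (hC1 : ∀ u ∈ K, ∀ v ∈ K, ∀ t ∈ Set.Icc (0 : ℝ) 1,
      η v (v + t • η u v) = (-t) • η u v)
    (hC2 : ∀ u ∈ K, ∀ v ∈ K, ∀ t ∈ Set.Icc (0 : ℝ) 1,
      η u (v + t • η u v) = (1 - t) • η u v)
    (f : (Fin n → ℝ) → ℝ) (hpos : ∀ u ∈ K, 0 < f u)
    (x y : Fin n → ℝ) (hx : x ∈ K) (hy : y ∈ K)
    (hlog : ∀ t₁ ∈ Set.Icc (0 : ℝ) 1, ∀ t₂ ∈ Set.Icc (0 : ℝ) 1,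
      ∀ l ∈ Set.Icc (0 : ℝ) 1,
        f (x + ((1 - l) * t₁ + l * t₂) • η y x)
          ≤ f (x + t₁ • η y x) ^ (1 - l) * f (x + t₂ • η y x) ^ l)
    (hcont : ContinuousOn (fun t : ℝ => f (x + t • η y x)) (Set.Icc 0 1))
    (a b : ℝ) (ha : a ∈ Set.Ioo (0 : ℝ) 1) (hb : b ∈ Set.Ioo (0 : ℝ) 1)
    (hab : a < b) (hne : f (x + a • η y x) ≠ f (x + b • η y x)) :
    |(1 / (b - a)) * (∫ s in a..b, ∫ t in (0 : ℝ)..s, f (x + t • η y x)) -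
        ∫ s in (0 : ℝ)..((a + b) / 2), f (x + s • η y x)|
      ≤ (b - a) *
        ((f (x + b • η y x) ^ ((1 : ℝ) / 2) - f (x + a • η y x) ^ ((1 : ℝ) / 2)) /
          (Real.log (f (x + b • η y x)) - Real.log (f (x + a • η y x)))) ^ 2 :=
  hh_several_variables_log_preinvex_general n K η hinvex f hpos x y hx hy hlog hcont a b ha hb hab
    hne
end
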